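/- arXiv:2509.13190 — 2 statements merged into one kernel-verified Lean document; each statement's English description precedes it below -/
import Mathlib

section
/- For every fixed partition λ = (λ_1, …, λ_t) of k and every fixed partition ν = (1^{a_1}, 2^{a_2}, …, m^{a_m}) of m, there exists a polynomial p with rational coefficients such that for all sufficiently large n ≥ λ_1 (in particular all n with n + k ≥ m), the value of the irreducible character χ^{(n,λ)} of S_{n+k} on the conjugacy class of cycle type (ν, 1^{n+k−m}) = (1^{a_1 + n+k−m}, 2^{a_2}, …, m^{a_m}) equals p(n). -/
open Finset

def cells (L : List ℕ) : Finset (ℕ × ℕ) :=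
  (Finset.range L.length ×ˢ Finset.range (L.sum + 1)).filter (fun p => p.2 < L.getD p.1 0)

def skewCells (L M : List ℕ) : Finset (ℕ × ℕ) := cells L \ cells M

def Cell (L M : List ℕ) : Type := {p : ℕ × ℕ // p ∈ skewCells L M}

noncomputable instance (L M : List ℕ) : Fintype (Cell L M) := by
  unfold Cell; infer_instance

def IsPartitionOf (k : ℕ) (L : List ℕ) : Prop :=
  L.Pairwise (· ≥ ·) ∧ (∀ x ∈ L, 0 < x) ∧ L.sum = k

def SubShape (M L : List ℕ) : Prop := ∀ i, M.getD i 0 ≤ L.getD i 0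

def IsSSYT (L M : List ℕ) (N : ℕ) (T : Cell L M → Fin N) : Prop :=
  (∀ c d : Cell L M, c.val.1 = d.val.1 → c.val.2 ≤ d.val.2 → T c ≤ T d) ∧
  (∀ c d : Cell L M, c.val.2 = d.val.2 → c.val.1 < d.val.1 → T c < T d)

open Classical in
noncomputable def skewSchur (N : ℕ) (L M : List ℕ) : MvPolynomial (Fin N) ℤ :=
  ∑ T : {T : Cell L M → Fin N // IsSSYT L M N T},
    ∏ c : Cell L M, MvPolynomial.X (T.val c)

/-- The full cycle type of a permutation of a finite type: its cycle type together with
one part equal to `1` for each fixed point. -/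
def fullCycleType {α : Type*} [Fintype α] [DecidableEq α] (π : Equiv.Perm α) : Multiset ℕ :=
  π.cycleType + Multiset.replicate (Fintype.card α - π.cycleType.sum) 1

/-- The Vandermonde product `∏_{i<j} (x_i - x_j)`. -/
noncomputable def vdm (N : ℕ) : MvPolynomial (Fin N) ℤ :=
  ∏ p ∈ Finset.univ.filter (fun p : Fin N × Fin N => p.1 < p.2),
    (MvPolynomial.X p.1 - MvPolynomial.X p.2)

/-- The product of power sums `p_A = ∏_{a ∈ A} p_a` over a multiset `A` of part sizes. -/
noncomputable def pprod (N : ℕ) (A : Multiset ℕ) : MvPolynomial (Fin N) ℤ :=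
  (A.map (fun a => MvPolynomial.psum (Fin N) ℤ a)).prod

/-- The value `χ^{L/M}(A)` of the skew character of the symmetric group indexed by the skew
shape `L/M` at the conjugacy class of cycle type `A`, via the Frobenius characteristic:
`χ^{L/M}(A) = ⟨s_{L/M}, p_A⟩ = ⟨s_L, s_M ⬝ p_A⟩`, which is the coefficient of `x^{λ+δ}`
in `p_A ⬝ s_M ⬝ ∏_{i<j}(x_i − x_j)` (in sufficiently many variables).
For `M = []` this is the irreducible character `χ^L`. -/
noncomputable def charValue (L M : List ℕ) (A : Multiset ℕ) : ℤ :=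
  MvPolynomial.coeff
    (Finsupp.equivFunOnFinite.symm
      (fun i : Fin (L.sum + L.length) =>
        L.getD (i : ℕ) 0 + (L.sum + L.length - 1 - (i : ℕ))))
    (pprod (L.sum + L.length) A * skewSchur (L.sum + L.length) M [] *
      vdm (L.sum + L.length))

/-- The Young subgroup `S_m × S_{N−m}` of `S_N`: permutations preserving `{0,…,m−1}`
(and hence its complement). -/
def youngSubgroup (N m : ℕ) : Subgroup (Equiv.Perm (Fin N)) where
  carrier := {σ | ∀ x : Fin N, (x : ℕ) < m ↔ (σ x : ℕ) < m}
  one_mem' := fun _ => Iff.rfl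
  mul_mem' := by
    intro a b ha hb x
    exact (hb x).trans (ha (b x))
  inv_mem' := by
    intro a ha x
    have h := (ha (a⁻¹ x)).symm
    simpa using h

lemma mem_youngSubgroup {N m : ℕ} {σ : Equiv.Perm (Fin N)} :
    σ ∈ youngSubgroup N m ↔ ∀ x : Fin N, (x : ℕ) < m ↔ (σ x : ℕ) < m := Iff.rfl

open Classical in
/-- The outer tensor product `ψ ⊗ φ` of class functions on `S_m` and `S_{N−m}`, as a function
on `S_N` supported on the Young subgroup: on `σ = π₁ × π₂` in the Young subgroup its value is
`ψ(π₁)·φ(π₂)`, and it is `0` elsewhere. -/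
noncomputable def youngTensor (N m : ℕ)
    (ψ : Equiv.Perm {x : Fin N // (x : ℕ) < m} → ℚ)
    (φ : Equiv.Perm {x : Fin N // ¬ (x : ℕ) < m} → ℚ)
    (σ : Equiv.Perm (Fin N)) : ℚ :=
  if h : σ ∈ youngSubgroup N m then
    ψ (σ.subtypePerm (fun x => (h x).symm)) * φ (σ.subtypePerm (fun x => not_congr (h x).symm))
  else 0

open Classical in
/-- The class function on `G` induced from the function `χ` on the subgroup `H`:
`χ↑(x) = (1/|H|) ∑_{g ∈ G, gxg⁻¹ ∈ H} χ(gxg⁻¹)`. -/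
noncomputable def inducedValue {G : Type*} [Group G] [Fintype G]
    (H : Subgroup G) (χ : G → ℚ) (x : G) : ℚ :=
  (1 / (Nat.card H : ℚ)) *
    ∑ g : G, if g * x * g⁻¹ ∈ H then χ (g * x * g⁻¹) else 0

section AuxStable
open MvPolynomial

instance : IsEmpty (Cell [] []) := by
  constructor; rintro ⟨p, hp⟩
  simp [skewCells, cells] at hp

open Classical in
lemma skewSchur_nil (N : ℕ) : skewSchur N [] [] = 1 := by
  unfold skewSchur
  haveI : Unique {T : Cell [] [] → Fin N // IsSSYT [] [] N T} :=
    { default := ⟨isEmptyElim, fun c => isEmptyElim c, fun c => isEmptyElim c⟩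
      uniq := fun T => Subtype.ext (funext fun c => isEmptyElim c) }
  rw [Fintype.sum_unique]
  exact Finset.prod_of_isEmpty _


noncomputable def down (N : ℕ) : MvPolynomial (Fin (N+1)) ℤ →ₐ[ℤ] MvPolynomial (Fin N) ℤ :=
  aeval (fun j : Fin (N+1) => if h : (j : ℕ) < N then X ⟨j, h⟩ else 0)

noncomputable def lower {N : ℕ} (β : Fin (N+1) →₀ ℕ) : Fin N →₀ ℕ :=
  Finsupp.equivFunOnFinite.symm (fun i => β i.castSucc)

lemma lower_apply {N : ℕ} (β : Fin (N+1) →₀ ℕ) (i : Fin N) : lower β i = β i.castSucc := rfl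

lemma lower_inj {N : ℕ} {β γ : Fin (N+1) →₀ ℕ} (hβ : β (Fin.last N) = 0)
    (hγ : γ (Fin.last N) = 0) (h : lower β = lower γ) : β = γ := by
  ext j
  induction j using Fin.lastCases with
  | last => exact hβ.trans hγ.symm
  | cast i =>
    have := congrArg (fun f => f i) (congrArg Finsupp.toFun h)
    exact this

lemma coeff_down {N : ℕ} (F : MvPolynomial (Fin (N+1)) ℤ) (β : Fin (N+1) →₀ ℕ)
    (hβ : β (Fin.last N) = 0) : coeff β F = coeff (lower β) (down N F) := by
  induction F using MvPolynomial.induction_on' with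
  | add p q hp hq => simp only [map_add, coeff_add, hp, hq]
  | monomial u a =>
    by_cases hu : u (Fin.last N) = 0
    · have hdown : down N (monomial u a) = monomial (lower u) a := by
        rw [down, aeval_monomial]
        have hprod : (u.prod fun i k => (if h : (i : ℕ) < N then (X ⟨i, h⟩ : MvPolynomial (Fin N) ℤ) else 0) ^ k)
            = (lower u).prod fun i k => (X i) ^ k := by
          rw [Finsupp.prod, Finsupp.prod]
          refine Finset.prod_bij (fun j hj => j.castPred ?_) ?_ ?_ ?_ ?_
          · rintro rfl; exact (Finsupp.mem_support_iff.mp hj) hu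
          · intro j hj
            rw [Finsupp.mem_support_iff, lower_apply, Fin.castSucc_castPred]
            exact Finsupp.mem_support_iff.mp hj
          · intro j₁ h₁ j₂ h₂ he
            have := congrArg Fin.castSucc he
            rwa [Fin.castSucc_castPred, Fin.castSucc_castPred] at this
          · intro i hi
            refine ⟨i.castSucc, ?_, ?_⟩
            · rw [Finsupp.mem_support_iff]
              rw [Finsupp.mem_support_iff, lower_apply] at hi
              exact hi
            · simp
          · intro j hj
            have hjN : (j : ℕ) < N := by
              have : j ≠ Fin.last N := by rintro rfl; exact (Finsupp.mem_support_iff.mp hj) hu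
              exact Fin.val_lt_last this
            rw [dif_pos hjN, lower_apply, Fin.castSucc_castPred]
            rfl
        rw [hprod, monomial_eq, algebraMap_eq]
      rw [hdown, coeff_monomial, coeff_monomial]
      by_cases he : u = β
      · rw [if_pos he, if_pos (by rw [he])]
      · rw [if_neg he, if_neg (fun hc => he (lower_inj hu hβ hc))]
    · have hdown : down N (monomial u a) = 0 := by
        rw [down, aeval_monomial]
        have : (u.prod fun i k => (if h : (i : ℕ) < N then (X ⟨i, h⟩ : MvPolynomial (Fin N) ℤ) else 0) ^ k) = 0 := by
          rw [Finsupp.prod]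
          refine Finset.prod_eq_zero (Finsupp.mem_support_iff.mpr hu) ?_
          rw [dif_neg (by simp), zero_pow hu]
        rw [this, mul_zero]
      rw [hdown, coeff_zero, coeff_monomial, if_neg]
      rintro rfl; exact hu hβ


lemma down_X_castSucc {N : ℕ} (i : Fin N) : down N (X i.castSucc) = X i := by
  rw [down, aeval_X, dif_pos (by simpa using i.isLt)]
  exact congrArg X (Fin.ext rfl)

lemma down_X_last {N : ℕ} : down N (X (Fin.last N)) = 0 := by
  rw [down, aeval_X, dif_neg (by simp)]

lemma down_psum (N : ℕ) (a : ℕ) (ha : 0 < a) :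
    down N (psum (Fin (N+1)) ℤ a) = psum (Fin N) ℤ a := by
  rw [psum, psum, map_sum, Fin.sum_univ_castSucc]
  rw [map_pow, down_X_last, zero_pow ha.ne', add_zero]
  refine Finset.sum_congr rfl fun i _ => ?_
  rw [map_pow, down_X_castSucc]

lemma down_pprod (N : ℕ) (A : Multiset ℕ) (hA : ∀ a ∈ A, 0 < a) :
    down N (pprod (N+1) A) = pprod N A := by
  rw [pprod, pprod, map_multiset_prod, Multiset.map_map]
  congr 1
  refine Multiset.map_congr rfl fun a haA => ?_
  simp only [Function.comp_apply]
  exact down_psum N a (hA a haA)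

lemma down_vdm (N : ℕ) :
    down N (vdm (N+1)) = vdm N * ∏ i : Fin N, X i := by
  rw [vdm, map_prod]
  have hsplit : (Finset.univ.filter (fun p : Fin (N+1) × Fin (N+1) => p.1 < p.2))
      = ((Finset.univ.filter (fun p : Fin N × Fin N => p.1 < p.2)).map
          ⟨fun p => (p.1.castSucc, p.2.castSucc), by
            intro p q h; simp only [Prod.mk.injEq] at h
            exact Prod.ext (Fin.castSucc_injective _ h.1) (Fin.castSucc_injective _ h.2)⟩)
        ∪ (Finset.univ.map ⟨fun i : Fin N => (i.castSucc, Fin.last N), by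
            intro i j h; simp only [Prod.mk.injEq] at h
            exact Fin.castSucc_injective _ h.1⟩) := by
    ext p
    simp only [Finset.mem_filter, Finset.mem_univ, true_and, Finset.mem_union, Finset.mem_map,
      Function.Embedding.coeFn_mk]
    constructor
    · intro hp
      by_cases h2 : p.2 = Fin.last N
      · right
        have h1 : p.1 ≠ Fin.last N := by
          intro h; rw [h, h2] at hp; exact lt_irrefl _ hp
        exact ⟨p.1.castPred h1, by
          exact Prod.ext (Fin.castSucc_castPred _ _) h2.symm⟩
      · left
        have h1' : p.1 ≠ Fin.last N := by
          intro h; rw [h] at hp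
          exact absurd (lt_of_le_of_lt (Fin.le_last _) hp) (lt_irrefl _)
        refine ⟨(p.1.castPred h1', p.2.castPred h2), ?_, ?_⟩
        · simp only [Finset.mem_filter, Finset.mem_univ, true_and]
          rw [← Fin.castSucc_lt_castSucc_iff, Fin.castSucc_castPred, Fin.castSucc_castPred]
          exact hp
        · exact Prod.ext (Fin.castSucc_castPred p.1 h1') (Fin.castSucc_castPred p.2 h2)
    · rintro (⟨q, hq, rfl⟩ | ⟨i, rfl⟩)
      · exact Fin.castSucc_lt_castSucc_iff.mpr hq
      · exact Fin.castSucc_lt_last i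
  rw [hsplit, Finset.prod_union, Finset.prod_map, Finset.prod_map]
  · congr 1
    · rw [vdm]
      refine Finset.prod_congr rfl fun p _ => ?_
      change down N (X p.1.castSucc - X p.2.castSucc) = _
      rw [map_sub, down_X_castSucc, down_X_castSucc]
    · refine Finset.prod_congr rfl fun i _ => ?_
      change down N (X i.castSucc - X (Fin.last N)) = _
      rw [map_sub, down_X_castSucc, down_X_last, sub_zero]
  · rw [Finset.disjoint_left]
    rintro p hp hq
    simp only [Finset.mem_map, Function.Embedding.coeFn_mk] at hp hq
    obtain ⟨q, _, rfl⟩ := hp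
    obtain ⟨i, _, h⟩ := hq
    have h2 := congrArg Prod.snd h
    exact (Fin.ne_last_of_lt (Fin.castSucc_lt_last q.2)) h2.symm

noncomputable def expo (Lf : List ℕ) (N : ℕ) : Fin N →₀ ℕ :=
  Finsupp.equivFunOnFinite.symm (fun i => Lf.getD i 0 + (N - 1 - (i : ℕ)))

lemma expo_apply (Lf : List ℕ) (N : ℕ) (i : Fin N) :
    expo Lf N i = Lf.getD i 0 + (N - 1 - (i : ℕ)) := rfl

noncomputable def ones (N : ℕ) : Fin N →₀ ℕ := Finsupp.equivFunOnFinite.symm 1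

lemma prod_X_eq_monomial (N : ℕ) :
    (∏ i : Fin N, (X i : MvPolynomial (Fin N) ℤ)) = monomial (ones N) 1 := by
  rw [monomial_eq, C_1, one_mul, Finsupp.prod_pow]
  exact Finset.prod_congr rfl fun i _ => (pow_one _).symm

lemma step (A : Multiset ℕ) (hA : ∀ a ∈ A, 0 < a) (Lf : List ℕ) (N : ℕ)
    (hN : Lf.length ≤ N) :
    coeff (expo Lf (N+1)) (pprod (N+1) A * vdm (N+1)) =
      coeff (expo Lf N) (pprod N A * vdm N) := by
  have h0 : expo Lf (N+1) (Fin.last N) = 0 := by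
    rw [expo_apply, List.getD_eq_default _ _ (by simpa using hN)]
    simp
  rw [coeff_down _ _ h0, map_mul, down_pprod _ _ hA, down_vdm]
  have hlow : lower (expo Lf (N+1)) = expo Lf N + ones N := by
    ext i
    rw [lower_apply, Finsupp.add_apply, expo_apply, expo_apply]
    have : (i.castSucc : ℕ) = (i : ℕ) := rfl
    rw [this]
    have hi : (i : ℕ) < N := i.isLt
    have : ones N i = 1 := rfl
    rw [this]; omega
  rw [hlow, ← mul_assoc, prod_X_eq_monomial, coeff_mul_monomial, mul_one]

lemma coeff_stable (A : Multiset ℕ) (hA : ∀ a ∈ A, 0 < a) (Lf : List ℕ) (N : ℕ)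
    (hN : Lf.length ≤ N) (j : ℕ) :
    coeff (expo Lf (N+j)) (pprod (N+j) A * vdm (N+j)) =
      coeff (expo Lf N) (pprod N A * vdm N) := by
  induction j with
  | zero => rfl
  | succ j ih =>
    rw [show N + (j+1) = (N + j) + 1 from rfl, step A hA Lf (N+j) (le_trans hN (Nat.le_add_right _ _)), ih]

lemma psum_homog (N a : ℕ) : (psum (Fin N) ℤ a).IsHomogeneous a := by
  rw [psum]
  exact IsHomogeneous.sum _ _ _ (fun i _ => isHomogeneous_X_pow _ _)

lemma pprod_homog (N : ℕ) (A : Multiset ℕ) : (pprod N A).IsHomogeneous A.sum := by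
  induction A using Multiset.induction_on with
  | empty => rw [pprod]; simpa using isHomogeneous_one (Fin N) ℤ
  | cons a A ih =>
    rw [pprod, Multiset.map_cons, Multiset.prod_cons, Multiset.sum_cons]
    exact (psum_homog N a).mul ih

lemma vdm_homog (N : ℕ) :
    (vdm N).IsHomogeneous (Finset.univ.filter (fun p : Fin N × Fin N => p.1 < p.2)).card := by
  rw [vdm, Finset.card_eq_sum_ones]
  exact IsHomogeneous.prod _ _ _
    (fun p _ => ((isHomogeneous_X (R := ℤ) _).sub (isHomogeneous_X (R := ℤ) _)))

lemma card_lt_pairs (N : ℕ) :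
    (Finset.univ.filter (fun p : Fin N × Fin N => p.1 < p.2)).card
      = ∑ i : Fin N, (N - 1 - (i : ℕ)) := by
  rw [Finset.card_eq_sum_card_fiberwise (f := Prod.snd) (t := Finset.univ)
    (fun x _ => Finset.mem_univ _)]
  have h1 : ∀ b : Fin N,
      ((Finset.univ.filter (fun p : Fin N × Fin N => p.1 < p.2)).filter
        (fun p => p.snd = b)).card = (b : ℕ) := by
    intro b
    rw [← Fin.card_Iio (b := b)]
    apply Finset.card_nbij (i := Prod.fst)
    · intro p hp
      rw [Finset.mem_coe] at hp ⊢
      simp only [Finset.mem_filter, Finset.mem_univ, true_and] at hp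
      rw [Finset.mem_Iio]
      rw [← hp.2]; exact hp.1
    · intro p hp q hq h
      simp only [Finset.mem_coe, Finset.mem_filter, Finset.mem_univ, true_and] at hp hq
      exact Prod.ext h (hp.2.trans hq.2.symm)
    · intro a ha
      rw [Finset.coe_Iio, Set.mem_Iio] at ha
      exact ⟨(a, b), by simp [ha], rfl⟩
  rw [Finset.sum_congr rfl (fun b _ => h1 b)]
  rw [← Equiv.sum_comp (Equiv.mk Fin.rev Fin.rev Fin.rev_rev Fin.rev_rev)
    (fun i : Fin N => (N - 1 - (i : ℕ)))]
  exact Finset.sum_congr rfl (fun i _ => by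
    simp only [Equiv.coe_fn_mk, Fin.val_rev]
    omega)

lemma prod_X_pow_eq_monomial' {N : ℕ} (f : Fin N → ℕ) :
    (∏ i : Fin N, (X i : MvPolynomial (Fin N) ℤ) ^ f i)
      = monomial (Finsupp.equivFunOnFinite.symm f) 1 := by
  rw [monomial_eq, C_1, one_mul, Finsupp.prod_pow]
  rfl

lemma coeff_psum_one_pow (N d : ℕ) (c : Fin N →₀ ℕ) :
    coeff c ((psum (Fin N) ℤ 1) ^ d)
      = if (∑ i, c i) = d then (Nat.multinomial Finset.univ ⇑c : ℤ) else 0 := by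
  rw [psum_one, Finset.sum_pow_eq_sum_piAntidiag, coeff_sum]
  have hterm : ∀ kf : Fin N → ℕ,
      coeff c ((Nat.multinomial Finset.univ kf : MvPolynomial (Fin N) ℤ) * ∏ i, X i ^ kf i)
        = if Finsupp.equivFunOnFinite.symm kf = c then (Nat.multinomial Finset.univ kf : ℤ) else 0 := by
    intro kf
    rw [← C_eq_coe_nat, coeff_C_mul, prod_X_pow_eq_monomial', coeff_monomial]
    split_ifs <;> simp
  rw [Finset.sum_congr rfl (fun kf _ => hterm kf)]
  by_cases hc : (∑ i, c i) = d
  · rw [if_pos hc]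
    rw [Finset.sum_eq_single_of_mem (⇑c) (by
      rw [Finset.mem_piAntidiag]
      exact ⟨hc, fun i _ => Finset.mem_univ i⟩)]
    · rw [if_pos (Finsupp.equivFunOnFinite_symm_coe c)]
    · intro kf _ hne
      rw [if_neg]
      intro h
      apply hne
      have := congrArg (⇑Finsupp.equivFunOnFinite) (h.trans (Finsupp.equivFunOnFinite_symm_coe c).symm)
      simp at this; exact this
  · rw [if_neg hc]
    refine Finset.sum_eq_zero fun kf hkf => ?_
    rw [Finset.mem_piAntidiag] at hkf
    rw [if_neg]
    intro h
    apply hc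
    rw [← hkf.1]
    have : ∀ i, c i = kf i := by
      intro i
      rw [← h]; rfl
    exact (Finset.sum_congr rfl (fun i _ => this i)).symm ▸ rfl

lemma sum_univ_eq_degree {N : ℕ} (γ : Fin N →₀ ℕ) : γ.degree = ∑ i, γ i :=
  Finset.sum_subset (Finset.subset_univ _)
    (fun _ _ hi => Finsupp.notMem_support_iff.mp hi)

lemma sum_getD_eq (l : List ℕ) : ∑ i : Fin l.length, l.getD i 0 = l.sum := by
  induction l with
  | nil => rfl
  | cons a l ih =>
    rw [List.length_cons, Fin.sum_univ_succ, List.sum_cons, ← ih]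
    rfl

open Classical in
lemma main_poly (L : List ℕ) (V : Multiset ℕ) (k m : ℕ) (hk : L.sum = k) (hV : V.sum = m) :
    ∃ p : Polynomial ℚ, ∀ n : ℕ, m ≤ n + k →
      ((coeff (expo (n :: L) (L.length + 1))
        (pprod (L.length + 1) (V + Multiset.replicate (n + k - m) 1)
          * vdm (L.length + 1)) : ℤ) : ℚ) = p.eval (n : ℚ) := by
  set N₀ := L.length + 1 with hN₀
  set G : MvPolynomial (Fin N₀) ℤ := pprod N₀ V * vdm N₀ with hG
  set Dv := (Finset.univ.filter (fun p : Fin N₀ × Fin N₀ => p.1 < p.2)).card with hDv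
  set τ : Fin N₀ →₀ ℕ := expo (0 :: L) N₀ with hτ
  set e : (Fin N₀ →₀ ℕ) → ℕ :=
    (fun γ => ∑ i ∈ Finset.univ.erase (0 : Fin N₀), (τ i - γ i)) with he
  set Mt : (Fin N₀ →₀ ℕ) → ℕ :=
    (fun γ => Nat.multinomial (Finset.univ.erase (0 : Fin N₀)) (fun i => τ i - γ i)) with hMt
  set q : (Fin N₀ →₀ ℕ) → Polynomial ℚ :=
    (fun γ => if (∀ i ∈ Finset.univ.erase (0 : Fin N₀), γ i ≤ τ i) then
        Polynomial.C ((Mt γ : ℚ) / (Nat.factorial (e γ)))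
          * ((descPochhammer ℚ (e γ)).comp (Polynomial.X + Polynomial.C ((k : ℚ) - m)))
      else 0) with hq
  refine ⟨∑ γ ∈ G.support, Polynomial.C ((coeff γ G : ℤ) : ℚ) * q γ, ?_⟩
  intro n hm
  set d := n + k - m with hd
  set β : Fin N₀ →₀ ℕ := expo (n :: L) N₀ with hβ
  -- basic facts
  have hγhom : ∀ γ ∈ G.support, ∑ i, γ i = m + Dv := by
    intro γ hγ
    have hhom : G.IsHomogeneous (m + Dv) := by
      rw [hG, ← hV]
      exact (pprod_homog N₀ V).mul (vdm_homog N₀)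
    have := hhom (MvPolynomial.mem_support_iff.mp hγ)
    replace this : γ.degree = m + Dv := by rw [Finsupp.degree_eq_weight_one]; exact this
    rw [← sum_univ_eq_degree, this]
  have hβτ : ∀ i : Fin N₀, i ≠ 0 → β i = τ i := by
    intro i hi
    obtain ⟨j, hj⟩ : ∃ j : ℕ, (i : ℕ) = j + 1 := by
      have : (i : ℕ) ≠ 0 := fun h => hi (Fin.ext h)
      exact ⟨(i : ℕ) - 1, by omega⟩
    rw [hβ, hτ, expo_apply, expo_apply, hj, List.getD_cons_succ, List.getD_cons_succ]
  have hβ0 : β 0 = n + L.length := by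
    rw [hβ, expo_apply]
    simp only [List.getD_cons_zero, Fin.val_zero]
    omega
  have hβsum : ∑ i, β i = (n + k) + Dv := by
    have h1 : ∑ i, β i = ∑ i : Fin N₀, (n :: L).getD i 0 + ∑ i : Fin N₀, (N₀ - 1 - (i : ℕ)) := by
      rw [← Finset.sum_add_distrib]
      rfl
    have h2 : ∑ i : Fin N₀, (n :: L).getD i 0 = n + k := by
      have : N₀ = (n :: L).length := by simp [hN₀]
      rw [show (∑ i : Fin N₀, (n :: L).getD i 0) = ∑ i : Fin (n :: L).length, (n :: L).getD i 0 by
        congr 1 <;> rw [this]]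
      rw [sum_getD_eq, List.sum_cons, hk]
    rw [h1, h2, ← card_lt_pairs, ← hDv]
  -- coefficient rewrite
  have hcoeff : coeff β (pprod N₀ (V + Multiset.replicate d 1) * vdm N₀)
      = ∑ γ ∈ G.support, coeff γ G *
          (if γ ≤ β then coeff (β - γ) ((psum (Fin N₀) ℤ 1) ^ d) else 0) := by
    have hsplit : pprod N₀ (V + Multiset.replicate d 1) * vdm N₀
        = G * (psum (Fin N₀) ℤ 1) ^ d := by
      rw [pprod, Multiset.map_add, Multiset.prod_add, Multiset.map_replicate,
        Multiset.prod_replicate, hG, pprod]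
      ring
    rw [hsplit, coeff_mul]
    rw [← Finset.sum_filter_of_ne (p := fun x : (Fin N₀ →₀ ℕ) × (Fin N₀ →₀ ℕ) => x.1 ∈ G.support)
      (fun x _ hx => by
        by_contra hxs
        exact hx (by rw [MvPolynomial.notMem_support_iff.mp hxs, zero_mul]))]
    rw [Finset.sum_nbij' (i := fun x => x.1) (j := fun γ => (γ, β - γ))
      (t := G.support.filter (fun γ => γ ≤ β))
      (hi := ?_) (hj := ?_) (left_neg := ?_) (right_neg := ?_) (h := ?_)]
    · rw [Finset.sum_filter]
      refine Finset.sum_congr rfl fun γ _ => ?_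
      split_ifs with h
      · rfl
      · rw [mul_zero]
    · intro x hx
      rw [Finset.mem_filter] at hx ⊢
      obtain ⟨hx1, hx2⟩ := hx
      rw [Finset.HasAntidiagonal.mem_antidiagonal] at hx1
      exact ⟨hx2, hx1 ▸ self_le_add_right x.1 x.2⟩
    · intro γ hγ
      rw [Finset.mem_filter] at hγ ⊢
      refine ⟨?_, hγ.1⟩
      rw [Finset.HasAntidiagonal.mem_antidiagonal]
      exact add_tsub_cancel_of_le hγ.2
    · intro x hx
      rw [Finset.mem_filter, Finset.HasAntidiagonal.mem_antidiagonal] at hx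
      ext1
      · rfl
      · simp only
        rw [← hx.1, add_tsub_cancel_left]
    · intro γ hγ
      rfl
    · intro x hx
      rw [Finset.mem_filter, Finset.HasAntidiagonal.mem_antidiagonal] at hx
      rw [← hx.1, add_tsub_cancel_left]
  rw [hcoeff]
  push_cast
  rw [Polynomial.eval_finset_sum]
  refine Finset.sum_congr rfl fun γ hγ => ?_
  rw [Polynomial.eval_mul, Polynomial.eval_C]
  congr 1
  -- per-term analysis
  have herase : ∀ i : Fin N₀, i ∈ Finset.univ.erase (0 : Fin N₀) → i ≠ 0 :=
    fun i hi => (Finset.mem_erase.mp hi).1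
  have hβer : ∑ i ∈ Finset.univ.erase (0 : Fin N₀), β i
      = ∑ i ∈ Finset.univ.erase (0 : Fin N₀), τ i :=
    Finset.sum_congr rfl fun i hi => hβτ i (herase i hi)
  have hade_β : β 0 + ∑ i ∈ Finset.univ.erase (0 : Fin N₀), β i = ∑ i, β i :=
    Finset.add_sum_erase _ _ (Finset.mem_univ 0)
  have hade_γ : γ 0 + ∑ i ∈ Finset.univ.erase (0 : Fin N₀), γ i = ∑ i, γ i :=
    Finset.add_sum_erase _ _ (Finset.mem_univ 0)
  have hγsum := hγhom γ hγ
  by_cases htail : ∀ i ∈ Finset.univ.erase (0 : Fin N₀), γ i ≤ τ i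
  · -- tail condition holds
    have he_add : e γ + ∑ i ∈ Finset.univ.erase (0 : Fin N₀), γ i
        = ∑ i ∈ Finset.univ.erase (0 : Fin N₀), τ i := by
      rw [he]
      rw [← Finset.sum_add_distrib]
      exact Finset.sum_congr rfl fun i hi => tsub_add_cancel_of_le (htail i hi)
    have hqeval : (q γ).eval (n : ℚ)
        = ((Mt γ : ℚ) / (Nat.factorial (e γ))) * ((Nat.choose d (e γ) : ℚ) * (Nat.factorial (e γ))) := by
      rw [hq]
      simp only [if_pos htail]
      rw [Polynomial.eval_mul, Polynomial.eval_C, Polynomial.eval_comp,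
        Polynomial.eval_add, Polynomial.eval_X, Polynomial.eval_C]
      congr 1
      have hcast : (n : ℚ) + ((k : ℚ) - (m : ℚ)) = ((d : ℕ) : ℚ) := by
        rw [hd, Nat.cast_sub hm]
        push_cast
        ring
      rw [hcast, descPochhammer_eval_eq_descFactorial,
        Nat.descFactorial_eq_factorial_mul_choose]
      push_cast
      ring
    by_cases h0 : γ 0 ≤ β 0
    · have hle : γ ≤ β := by
        rw [Finsupp.le_def]
        intro i
        by_cases hi0 : i = 0
        · rw [hi0]; exact h0
        · rw [hβτ i hi0]
          exact htail i (Finset.mem_erase.mpr ⟨hi0, Finset.mem_univ i⟩)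
      rw [if_pos hle, coeff_psum_one_pow]
      have hsub : ∀ i, (β - γ) i = β i - γ i := fun i => Finsupp.tsub_apply β γ i
      have hsumd : ∑ i, (β - γ) i = d := by
        have h1 : ∑ i, (β - γ) i + ∑ i, γ i = ∑ i, β i := by
          rw [← Finset.sum_add_distrib]
          exact Finset.sum_congr rfl fun i _ => by
            rw [hsub i]; exact tsub_add_cancel_of_le (Finsupp.le_def.mp hle i)
        omega
      rw [if_pos hsumd]
      have hc0e : (β - γ) 0 + e γ = d := by
        have h1 : (β - γ) 0 = β 0 - γ 0 := hsub 0
        omega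
      have huniv : (Finset.univ : Finset (Fin N₀))
          = insert (0 : Fin N₀) (Finset.univ.erase 0) :=
        (Finset.insert_erase (Finset.mem_univ 0)).symm
      rw [huniv, Nat.multinomial_insert (Finset.notMem_erase _ _)]
      have hade_bg : (β - γ) 0 + ∑ i ∈ Finset.univ.erase (0 : Fin N₀), (β - γ) i
          = ∑ i, (β - γ) i := Finset.add_sum_erase _ _ (Finset.mem_univ 0)
      have hch : ((β - γ) 0 + ∑ i ∈ Finset.univ.erase (0 : Fin N₀), (β - γ) i) = d := by
        omega
      rw [hch]
      have hsymm : d.choose ((β - γ) 0) = d.choose (e γ) := by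
        have h1 : (β - γ) 0 = d - e γ := by omega
        rw [h1, Nat.choose_symm (by omega)]
      have hmt : Nat.multinomial (Finset.univ.erase (0 : Fin N₀)) ⇑(β - γ) = Mt γ := by
        rw [hMt]
        exact Nat.multinomial_congr fun i hi => by rw [hsub i, hβτ i (herase i hi)]
      rw [hsymm, hmt, hqeval]
      have hfac : ((Nat.factorial (e γ) : ℚ)) ≠ 0 := Nat.cast_ne_zero.mpr (Nat.factorial_ne_zero _)
      push_cast
      field_simp
    · -- head fails: both sides vanish
      have hnle : ¬ γ ≤ β := fun hle => h0 (Finsupp.le_def.mp hle 0)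
      rw [if_neg hnle]
      have hlt : d < e γ := by omega
      rw [hqeval, Nat.choose_eq_zero_of_lt hlt]
      simp
  · -- tail fails: both sides vanish
    have hq0 : q γ = 0 := by rw [hq]; exact if_neg htail
    rw [hq0, Polynomial.eval_zero]
    push_neg at htail
    obtain ⟨i, hie, hlt⟩ := htail
    have hnle : ¬ γ ≤ β := by
      intro hle
      have := Finsupp.le_def.mp hle i
      rw [hβτ i (herase i hie)] at this
      omega
    rw [if_neg hnle]

end AuxStable

/-- For fixed `λ ⊢ k` and fixed `ν ⊢ m`, the value of `χ^{(n,λ)}` on the class of cycle type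
`(ν, 1^{n+k−m})` is a polynomial in `n`. -/
theorem char_value_stable_polynomial (k t m : ℕ) (L : List ℕ) (hlen : L.length = t)
    (hpart : IsPartitionOf k L)
    (V : Multiset ℕ) (hV : V.sum = m) (hVpos : ∀ x ∈ V, 0 < x) :
    ∃ p : Polynomial ℚ, ∀ n : ℕ, L.headD 0 ≤ n → m ≤ n + k →
      (charValue (n :: L) [] (V + Multiset.replicate (n + k - m) 1) : ℚ) =
        p.eval (n : ℚ) := by
  obtain ⟨p, hp⟩ := main_poly L V k m hpart.2.2 hV
  refine ⟨p, ?_⟩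
  intro n _ hm
  set A : Multiset ℕ := V + Multiset.replicate (n + k - m) 1 with hA
  have hApos : ∀ a ∈ A, 0 < a := by
    intro a ha
    rcases Multiset.mem_add.mp ha with h | h
    · exact hVpos a h
    · rw [Multiset.eq_of_mem_replicate h]; exact one_pos
  have hcv : charValue (n :: L) [] A
      = MvPolynomial.coeff (expo (n :: L) ((n :: L).sum + (n :: L).length))
          (pprod ((n :: L).sum + (n :: L).length) A
            * vdm ((n :: L).sum + (n :: L).length)) := by
    rw [charValue, skewSchur_nil, mul_one]
    rfl
  set gfun : ℕ → ℤ :=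
    (fun N => MvPolynomial.coeff (expo (n :: L) N) (pprod N A * vdm N)) with hgfun
  have hcv2 : charValue (n :: L) [] A = gfun ((L.length + 1) + (n + k)) := by
    rw [hcv]
    have harg : (n :: L).sum + (n :: L).length = (L.length + 1) + (n + k) := by
      rw [List.sum_cons, List.length_cons, hpart.2.2]
      omega
    rw [harg]
  have hstab := coeff_stable A hApos (n :: L) (L.length + 1)
    (by rw [List.length_cons]) (n + k)
  rw [hcv2, hgfun]
  simp only
  rw [hstab]
  exact hp n hm
end

section
/- For every fixed partition λ = (λ_1, …, λ_t) of k, the map n ↦ f^{(n,λ)} agrees for all n ≥ λ_1 with a polynomial in n of degree k with rational coefficients; explicitly, f^{(n,λ)} = Σ_{j=0}^{t} (-1)^j C(n+k, k−j) f^{λ/(1^j)}, and each binomial coefficient C(n+k, k−j) is a polynomial in n of degree k−j. -/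
open Finset

/-- The number of standard Young tableaux of skew shape `L/M`: bijective fillings of the
cells by `{0, …, #cells − 1}` that strictly increase along rows and down columns. -/
noncomputable def sytCount (L M : List ℕ) : ℕ :=
  Nat.card {T : Cell L M → Fin (skewCells L M).card //
    Function.Bijective T ∧
    (∀ c d : Cell L M, c.val.1 = d.val.1 → c.val.2 < d.val.2 → T c < T d) ∧
    (∀ c d : Cell L M, c.val.2 = d.val.2 → c.val.1 < d.val.1 → T c < T d)}

/-- The complete homogeneous symmetric polynomial `h_m` in `N` variables, indexed by an
integer `m`, with the conventions `h_0 = 1` and `h_m = 0` for `m < 0`.  (For `m ≥ 0` it is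
the Schur polynomial of the one-row shape `(m)`.) -/
noncomputable def hInt (N : ℕ) (m : ℤ) : MvPolynomial (Fin N) ℤ :=
  if 0 ≤ m then skewSchur N [m.toNat] [] else 0

namespace SytAux

def rw (L : List ℕ) (i : ℕ) : ℕ := L.getD i 0

lemma rw_le_sum (L : List ℕ) (i : ℕ) : rw L i ≤ L.sum := by
  rcases lt_or_ge i L.length with h | h
  · rw [rw, List.getD_eq_getElem _ _ h]
    exact List.single_le_sum (fun x _ => Nat.zero_le x) _ (List.getElem_mem h)
  · rw [rw, List.getD_eq_default _ _ h]; exact Nat.zero_le _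

lemma rw_eq_zero_of_le {L : List ℕ} {i : ℕ} (h : L.length ≤ i) : rw L i = 0 :=
  List.getD_eq_default _ _ h

lemma lt_length_of_rw_pos {L : List ℕ} {i : ℕ} (h : 0 < rw L i) : i < L.length := by
  by_contra hc
  rw [rw_eq_zero_of_le (le_of_not_gt hc)] at h
  exact Nat.lt_irrefl 0 h

lemma mem_cells {L : List ℕ} {p : ℕ × ℕ} : p ∈ cells L ↔ p.2 < rw L p.1 := by
  constructor
  · intro h
    exact (Finset.mem_filter.1 h).2
  · intro h
    refine Finset.mem_filter.2 ⟨Finset.mem_product.2 ⟨?_, ?_⟩, h⟩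
    · exact Finset.mem_range.2 (lt_length_of_rw_pos (Nat.lt_of_le_of_lt (Nat.zero_le _) h))
    · exact Finset.mem_range.2 (lt_of_lt_of_le h (le_trans (rw_le_sum L p.1) (Nat.le_succ_of_le (le_refl _))))

lemma mem_skewCells {L M : List ℕ} {p : ℕ × ℕ} :
    p ∈ skewCells L M ↔ rw M p.1 ≤ p.2 ∧ p.2 < rw L p.1 := by
  rw [skewCells, Finset.mem_sdiff, mem_cells, mem_cells]
  constructor
  · rintro ⟨h1, h2⟩; exact ⟨le_of_not_gt h2, h1⟩
  · rintro ⟨h1, h2⟩; exact ⟨h2, not_lt_of_ge h1⟩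

lemma rw_replicate (j i : ℕ) : rw (List.replicate j 1) i = if i < j then 1 else 0 := by
  rcases lt_or_ge i j with h | h
  · rw [rw, List.getD_eq_getElem _ _ (by simpa using h)]; simp [h]
  · rw [rw, List.getD_eq_default _ _ (by simpa using h)]; simp [not_lt_of_ge h]

lemma rw_set_eq {L : List ℕ} {i : ℕ} (a : ℕ) (h : i < L.length) : rw (L.set i a) i = a := by
  rw [rw, List.getD_eq_getElem _ _ (by simpa using h)]; simp [List.getElem_set]

lemma rw_set_ne {L : List ℕ} {i j : ℕ} (a : ℕ) (h : i ≠ j) : rw (L.set i a) j = rw L j := by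
  rcases lt_or_ge j L.length with hj | hj
  · rw [rw, List.getD_eq_getElem _ _ (by simpa using hj), rw, List.getD_eq_getElem _ _ hj]
    simp [List.getElem_set, h]
  · rw [rw, List.getD_eq_default _ _ (by simpa using hj), rw, List.getD_eq_default _ _ hj]

/-- sortedness in terms of rw -/
lemma rw_anti {L : List ℕ} (hL : L.Pairwise (· ≥ ·)) {i j : ℕ} (hij : i ≤ j) :
    rw L j ≤ rw L i := by
  rcases eq_or_lt_of_le hij with rfl | hij
  · exact le_refl _
  rcases lt_or_ge j L.length with hj | hj
  · have hi : i < L.length := lt_trans hij hj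
    rw [rw, List.getD_eq_getElem _ _ hj, rw, List.getD_eq_getElem _ _ hi]
    have := List.pairwise_iff_get.1 hL ⟨i, hi⟩ ⟨j, hj⟩ hij
    simpa using this
  · rw [rw_eq_zero_of_le hj]; exact Nat.zero_le _

/-- skewCells as a disjoint union of row intervals -/
lemma skewCells_eq_biUnion (L M : List ℕ) :
    skewCells L M = (Finset.range L.length).biUnion
      (fun i => {i} ×ˢ Finset.Ico (rw M i) (rw L i)) := by
  ext ⟨i, c⟩
  simp only [mem_skewCells, Finset.mem_biUnion, Finset.mem_range, Finset.mem_product,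
    Finset.mem_singleton, Finset.mem_Ico]
  constructor
  · rintro ⟨h1, h2⟩
    exact ⟨i, lt_length_of_rw_pos (Nat.lt_of_le_of_lt (Nat.zero_le _) h2), rfl, h1, h2⟩
  · rintro ⟨i', _, rfl, h1, h2⟩
    exact ⟨h1, h2⟩

lemma card_skewCells (L M : List ℕ) :
    (skewCells L M).card = ∑ i ∈ Finset.range L.length, (rw L i - rw M i) := by
  rw [skewCells_eq_biUnion, Finset.card_biUnion]
  · apply Finset.sum_congr rfl
    intro i _
    rw [Finset.card_product, Finset.card_singleton, Nat.card_Ico, one_mul]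
  · intro x _ y _ hxy
    simp only [Finset.disjoint_left]
    rintro ⟨a, b⟩ ha hb
    simp only [Finset.mem_product, Finset.mem_singleton] at ha hb
    exact hxy (ha.1.symm.trans hb.1)

lemma sytCount_congr {L M L' M' : List ℕ} (h : skewCells L M = skewCells L' M') :
    sytCount L M = sytCount L' M' := by
  unfold sytCount Cell
  rw [h]


/-- The standardness predicate, matching the definition inside `sytCount`. -/
def Std (L M : List ℕ) (T : Cell L M → Fin (skewCells L M).card) : Prop :=
  Function.Bijective T ∧
  (∀ c d : Cell L M, c.val.1 = d.val.1 → c.val.2 < d.val.2 → T c < T d) ∧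
  (∀ c d : Cell L M, c.val.2 = d.val.2 → c.val.1 < d.val.1 → T c < T d)

lemma sytCount_eq (L M : List ℕ) : sytCount L M = Nat.card {T // Std L M T} := rfl

lemma sytCount_of_empty {L M : List ℕ} (h : skewCells L M = ∅) : sytCount L M = 1 := by
  rw [sytCount_eq]
  have hempty : IsEmpty (Cell L M) := by
    constructor; rintro ⟨p, hp⟩; rw [h] at hp; exact absurd hp (Finset.notMem_empty p)
  have hzero : (skewCells L M).card = 0 := by simp [h]
  haveI : Unique {T // Std L M T} := by
    refine ⟨⟨⟨fun c => (hempty.false c).elim, ?_, ?_, ?_⟩⟩, ?_⟩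
    · constructor
      · intro a; exact (hempty.false a).elim
      · intro b; rw [hzero] at b; exact absurd b.isLt (by omega)
    · intro c; exact (hempty.false c).elim
    · intro c; exact (hempty.false c).elim
    · rintro ⟨T, hT⟩
      apply Subtype.ext
      funext c; exact (hempty.false c).elim
  exact Nat.card_unique

/-- Decrement the `i`-th row of `L`. -/
def dec (L : List ℕ) (i : ℕ) : List ℕ := L.set i (rw L i - 1)

def IsCorner (L M : List ℕ) (i : ℕ) : Prop :=
  rw L (i + 1) < rw L i ∧ rw M i < rw L i

noncomputable def cornerFinset (L M : List ℕ) : Finset ℕ :=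
  (Finset.range L.length).filter (fun i => rw L (i+1) < rw L i ∧ rw M i < rw L i)

lemma mem_cornerFinset {L M : List ℕ} {i : ℕ} :
    i ∈ cornerFinset L M ↔ IsCorner L M i := by
  unfold cornerFinset IsCorner
  simp only [Finset.mem_filter, Finset.mem_range]
  constructor
  · rintro ⟨_, h⟩; exact h
  · intro h
    exact ⟨lt_length_of_rw_pos (lt_of_le_of_lt (Nat.zero_le _) h.2), h⟩

lemma corner_lt_length {L M : List ℕ} {i : ℕ} (h : IsCorner L M i) : i < L.length :=
  lt_length_of_rw_pos (lt_of_le_of_lt (Nat.zero_le _) h.2)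

lemma rw_dec_eq {L : List ℕ} {i : ℕ} (h : i < L.length) : rw (dec L i) i = rw L i - 1 :=
  rw_set_eq _ h

lemma rw_dec_ne {L : List ℕ} {i j : ℕ} (h : i ≠ j) : rw (dec L i) j = rw L j :=
  rw_set_ne _ h

lemma skewCells_dec {L M : List ℕ} {i : ℕ} (h : IsCorner L M i) :
    skewCells (dec L i) M = (skewCells L M).erase (i, rw L i - 1) := by
  have hi := corner_lt_length h
  ext ⟨a, c⟩
  simp only [Finset.mem_erase, mem_skewCells, ne_eq, Prod.mk.injEq, not_and]
  rcases eq_or_ne a i with rfl | ha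
  · rw [rw_dec_eq hi]
    have := h.2
    constructor
    · rintro ⟨h1, h2⟩; exact ⟨fun _ => by omega, h1, by omega⟩
    · rintro ⟨h1, h2, h3⟩
      have := h1 rfl
      exact ⟨h2, by omega⟩
  · rw [rw_dec_ne (Ne.symm ha)]
    constructor
    · rintro ⟨h1, h2⟩; exact ⟨fun hh => absurd hh ha, h1, h2⟩
    · rintro ⟨_, h1, h2⟩; exact ⟨h1, h2⟩

lemma corner_mem {L M : List ℕ} {i : ℕ} (h : IsCorner L M i) :
    ((i, rw L i - 1) : ℕ × ℕ) ∈ skewCells L M := by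
  refine mem_skewCells.2 ?_
  dsimp only
  have := h.2
  exact ⟨by omega, by omega⟩

lemma card_skewCells_dec {L M : List ℕ} {i : ℕ} (h : IsCorner L M i) :
    (skewCells (dec L i) M).card = (skewCells L M).card - 1 := by
  rw [skewCells_dec h, Finset.card_erase_of_mem (corner_mem h)]

lemma dec_sorted {L M : List ℕ} {i : ℕ} (hL : L.Pairwise (· ≥ ·)) (h : IsCorner L M i) :
    (dec L i).Pairwise (· ≥ ·) := by
  have hi := corner_lt_length h
  rw [List.pairwise_iff_get] at hL ⊢
  intro a b hab
  have hlen : (dec L i).length = L.length := by simp [dec]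
  have hget : ∀ (x : Fin (dec L i).length), (dec L i).get x = rw (dec L i) x.val := by
    intro x
    rw [rw, List.getD_eq_getElem _ _ x.isLt]
    simp [List.get_eq_getElem]
  rw [hget a, hget b]
  have hgetL : ∀ (j : ℕ) (hj : j < L.length), L.get ⟨j, hj⟩ = rw L j := by
    intro j hj
    rw [rw, List.getD_eq_getElem _ _ hj]
    simp [List.get_eq_getElem]
  have hanti : ∀ {x y : ℕ}, x ≤ y → rw L y ≤ rw L x := fun {x y} hxy => by
    rcases eq_or_lt_of_le hxy with rfl | hlt
    · exact le_refl _
    rcases lt_or_ge y L.length with hy | hy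
    · rw [← hgetL x (by omega), ← hgetL y hy]
      exact hL ⟨x, by omega⟩ ⟨y, hy⟩ hlt
    · rw [rw_eq_zero_of_le hy]; exact Nat.zero_le _
  have hab' : (a : ℕ) < (b : ℕ) := hab
  rcases eq_or_ne (a : ℕ) i with ha | ha
  · rw [ha, rw_dec_eq hi, rw_dec_ne (show i ≠ (b : ℕ) by omega)]
    have h1 : rw L (i+1) ≤ rw L i - 1 := by have := h.1; omega
    have h2 : rw L b.val ≤ rw L (i + 1) := hanti (by omega)
    omega
  · rw [rw_dec_ne (Ne.symm ha)]
    rcases eq_or_ne (b : ℕ) i with hb | hb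
    · rw [hb, rw_dec_eq hi]
      have : rw L i ≤ rw L a.val := hanti (by omega)
      omega
    · rw [rw_dec_ne (Ne.symm hb)]
      exact hanti (le_of_lt hab')

lemma exists_corner {L M : List ℕ} (hL : L.Pairwise (· ≥ ·)) (hM : M.Pairwise (· ≥ ·))
    (hne : (skewCells L M).Nonempty) : ∃ i, IsCorner L M i := by
  classical
  set s := (skewCells L M).image Prod.fst with hs
  have hsne : s.Nonempty := hne.image _
  set i := s.max' hsne with hi
  have himem : i ∈ s := s.max'_mem hsne
  obtain ⟨p, hp, hpi⟩ := Finset.mem_image.1 himem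
  obtain ⟨hp1, hp2⟩ := mem_skewCells.1 hp
  refine ⟨i, ?_, ?_⟩
  · by_contra hcon
    push_neg at hcon
    have hmem : ((i+1, rw M (i+1)) : ℕ × ℕ) ∈ skewCells L M := by
      refine mem_skewCells.2 ?_
      dsimp only
      refine ⟨le_refl _, ?_⟩
      have h1 : rw M (i+1) ≤ rw M i := rw_anti hM (by omega)
      have h2 : rw M i ≤ p.2 := by rw [hpi] at hp1; exact hp1
      have h3 : p.2 < rw L i := by rw [hpi] at hp2; exact hp2
      omega
    have : i + 1 ∈ s := Finset.mem_image.2 ⟨_, hmem, rfl⟩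
    have := s.le_max' _ this
    omega
  · rw [hpi] at hp1 hp2; omega

section Rec

variable {L M : List ℕ}

lemma maxcell_spec (hL : L.Pairwise (· ≥ ·)) (hM : M.Pairwise (· ≥ ·))
    {T : Cell L M → Fin (skewCells L M).card} (hT : Std L M T)
    {c0 : Cell L M} (hc0 : (T c0 : ℕ) = (skewCells L M).card - 1) :
    IsCorner L M c0.val.1 ∧ c0.val.2 = rw L c0.val.1 - 1 := by
  have hmax : ∀ d : Cell L M, d ≠ c0 → (T d : ℕ) < (T c0 : ℕ) := by
    intro d hd
    have h1 : T d ≠ T c0 := fun h => hd (hT.1.1 h)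
    have h2 : (T d : ℕ) < (skewCells L M).card := (T d).isLt
    have h3 : (T d : ℕ) ≠ (T c0 : ℕ) := fun h => h1 (Fin.ext h)
    omega
  obtain ⟨⟨i, c⟩, hmem⟩ := c0
  obtain ⟨hm, hl⟩ := mem_skewCells.1 hmem
  dsimp only at hm hl hc0 ⊢
  have hright : ¬ (c + 1 < rw L i) := by
    intro hcon
    have hd : ((i, c+1) : ℕ × ℕ) ∈ skewCells L M := mem_skewCells.2 ⟨by dsimp only; omega, hcon⟩
    have hlt := hT.2.1 ⟨(i,c), hmem⟩ ⟨(i,c+1), hd⟩ rfl (Nat.lt_succ_self c)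
    have hne : (⟨(i,c+1), hd⟩ : Cell L M) ≠ ⟨(i,c), hmem⟩ := by
      intro hcon2
      have := congrArg (fun x => x.val.2) hcon2
      simp at this
    have := hmax _ hne
    rw [Fin.lt_def] at hlt
    omega
  have hc : c = rw L i - 1 := by omega
  have hbelow : ¬ (c < rw L (i+1)) := by
    intro hcon
    have hd : ((i+1, c) : ℕ × ℕ) ∈ skewCells L M := by
      refine mem_skewCells.2 ⟨?_, hcon⟩
      dsimp only
      exact le_trans (rw_anti hM (Nat.le_succ i)) hm
    have hlt := hT.2.2 ⟨(i,c), hmem⟩ ⟨(i+1,c), hd⟩ rfl (Nat.lt_succ_self i)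
    have hne : (⟨(i+1,c), hd⟩ : Cell L M) ≠ ⟨(i,c), hmem⟩ := by
      intro hcon2
      have := congrArg (fun x => x.val.1) hcon2
      simp at this
    have := hmax _ hne
    rw [Fin.lt_def] at hlt
    omega
  exact ⟨⟨by omega, by omega⟩, hc⟩

noncomputable def theMax (hne : (skewCells L M).Nonempty)
    (T : Cell L M → Fin (skewCells L M).card) : Cell L M :=
  @Function.invFun _ _ ⟨⟨hne.choose, hne.choose_spec⟩⟩ T
    ⟨(skewCells L M).card - 1, Nat.sub_lt (Finset.card_pos.2 hne) Nat.one_pos⟩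

lemma theMax_spec (hne : (skewCells L M).Nonempty)
    {T : Cell L M → Fin (skewCells L M).card} (hT : Std L M T) :
    (T (theMax hne T) : ℕ) = (skewCells L M).card - 1 := by
  haveI : Nonempty (Cell L M) := ⟨⟨hne.choose, hne.choose_spec⟩⟩
  have := Function.invFun_eq (f := T)
    (b := ⟨(skewCells L M).card - 1, Nat.sub_lt (Finset.card_pos.2 hne) Nat.one_pos⟩)
    (hT.1.2 _)
  rw [theMax]
  rw [this]

lemma theMax_eq (hne : (skewCells L M).Nonempty)
    {T : Cell L M → Fin (skewCells L M).card} (hT : Std L M T)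
    {c : Cell L M} (hc : (T c : ℕ) = (skewCells L M).card - 1) :
    theMax hne T = c := by
  apply hT.1.1
  apply Fin.ext
  rw [theMax_spec hne hT, hc]

lemma card_cell (L M : List ℕ) : Nat.card (Cell L M) = (skewCells L M).card :=
  Nat.card_eq_finsetCard _

variable {i : ℕ}

/-- view a cell of the decremented shape as a cell of the original shape -/
def dropCell (hi : IsCorner L M i) (c : Cell (dec L i) M) : Cell L M :=
  ⟨c.val, (Finset.mem_erase.1 ((Finset.ext_iff.1 (skewCells_dec hi) c.val).1 c.2)).2⟩

lemma dropCell_ne (hi : IsCorner L M i) (c : Cell (dec L i) M) :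
    (dropCell hi c).val ≠ (i, rw L i - 1) :=
  (Finset.mem_erase.1 ((Finset.ext_iff.1 (skewCells_dec hi) c.val).1 c.2)).1

/-- view a non-corner cell of the original shape as a cell of the decremented shape -/
def liftCell (hi : IsCorner L M i) (c : Cell L M) (h : c.val ≠ (i, rw L i - 1)) :
    Cell (dec L i) M :=
  ⟨c.val, (Finset.ext_iff.1 (skewCells_dec hi) c.val).2 (Finset.mem_erase.2 ⟨h, c.2⟩)⟩

noncomputable def resFun (hi : IsCorner L M i) (T : Cell L M → Fin (skewCells L M).card)
    (hT : ∀ c : Cell (dec L i) M, (T (dropCell hi c) : ℕ) < (skewCells (dec L i) M).card) :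
    Cell (dec L i) M → Fin (skewCells (dec L i) M).card :=
  fun c => ⟨(T (dropCell hi c) : ℕ), hT c⟩

lemma resFun_val (hi : IsCorner L M i) (T : Cell L M → Fin (skewCells L M).card)
    (hT : ∀ c : Cell (dec L i) M, (T (dropCell hi c) : ℕ) < (skewCells (dec L i) M).card)
    (c : Cell (dec L i) M) : (resFun hi T hT c : ℕ) = (T (dropCell hi c) : ℕ) := rfl

noncomputable def extFun (hi : IsCorner L M i)
    (T' : Cell (dec L i) M → Fin (skewCells (dec L i) M).card) :
    Cell L M → Fin (skewCells L M).card := fun c =>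
  if h : c.val = (i, rw L i - 1) then
    ⟨(skewCells L M).card - 1,
      Nat.sub_lt (Finset.card_pos.2 ⟨_, corner_mem hi⟩) Nat.one_pos⟩
  else
    ⟨(T' (liftCell hi c h) : ℕ), by
      have h1 := (T' (liftCell hi c h)).isLt
      have h2 := card_skewCells_dec hi
      have h3 : 1 ≤ (skewCells L M).card := Finset.card_pos.2 ⟨_, corner_mem hi⟩
      omega⟩

lemma extFun_pos (hi : IsCorner L M i) (T' : Cell (dec L i) M → Fin (skewCells (dec L i) M).card)
    {c : Cell L M} (h : c.val = (i, rw L i - 1)) :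
    ((extFun hi T') c : ℕ) = (skewCells L M).card - 1 := by
  unfold extFun
  rw [dif_pos h]

lemma extFun_neg (hi : IsCorner L M i) (T' : Cell (dec L i) M → Fin (skewCells (dec L i) M).card)
    {c : Cell L M} (h : c.val ≠ (i, rw L i - 1)) :
    ((extFun hi T') c : ℕ) = (T' (liftCell hi c h) : ℕ) := by
  unfold extFun
  rw [dif_neg h]

lemma fiber_count (hL : L.Pairwise (· ≥ ·)) (hM : M.Pairwise (· ≥ ·))
    (hne : (skewCells L M).Nonempty) (hi : IsCorner L M i) :
    Nat.card {TT : {T // Std L M T} // (theMax hne TT.1).val.1 = i} = sytCount (dec L i) M := by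
  classical
  rw [sytCount_eq]
  have hn1 : 1 ≤ (skewCells L M).card := Finset.card_pos.2 hne
  have hcard' : (skewCells (dec L i) M).card = (skewCells L M).card - 1 := card_skewCells_dec hi
  have cmax : ((i, rw L i - 1) : ℕ × ℕ) ∈ skewCells L M := corner_mem hi
  -- facts about an element of the fiber
  have key : ∀ (T : Cell L M → Fin (skewCells L M).card), Std L M T →
      (theMax hne T).val.1 = i →
      (theMax hne T).val = (i, rw L i - 1) ∧
      (∀ c : Cell L M, c.val ≠ (i, rw L i - 1) → (T c : ℕ) < (skewCells L M).card - 1) := by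
    intro T hT hfib
    have hc0v : (T (theMax hne T) : ℕ) = (skewCells L M).card - 1 := theMax_spec hne hT
    have geo := maxcell_spec hL hM hT hc0v
    have hval : (theMax hne T).val = (i, rw L i - 1) := by
      have h2 := geo.2
      rw [hfib] at h2
      exact Prod.ext hfib h2
    refine ⟨hval, ?_⟩
    intro c hc
    have hcne : c ≠ theMax hne T := by
      intro hcon
      rw [hcon, hval] at hc
      exact hc rfl
    have h1 : T c ≠ T (theMax hne T) := fun h => hcne (hT.1.1 h)
    have h2 : (T c : ℕ) < (skewCells L M).card := (T c).isLt
    have h3 : (T c : ℕ) ≠ (T (theMax hne T) : ℕ) := fun h => h1 (Fin.ext h)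
    omega
  have keybound : ∀ (TT : {T // Std L M T}) (h : (theMax hne TT.1).val.1 = i)
      (c : Cell (dec L i) M), (TT.1 (dropCell hi c) : ℕ) < (skewCells (dec L i) M).card := by
    intro TT h c
    have := (key TT.1 TT.2 h).2 (dropCell hi c) (dropCell_ne hi c)
    omega
  have hres : ∀ (TT : {T // Std L M T}) (h : (theMax hne TT.1).val.1 = i),
      Std (dec L i) M (resFun hi TT.1 (keybound TT h)) := by
    intro TT h
    refine ⟨?_, ?_, ?_⟩
    · rw [Nat.bijective_iff_injective_and_card]
      constructor
      · intro a b hab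
        have hab' := congrArg Fin.val hab
        rw [resFun_val, resFun_val] at hab'
        have h2 := TT.2.1.1 (Fin.ext hab')
        have h3 := congrArg Subtype.val h2
        exact Subtype.ext h3
      · rw [card_cell, Nat.card_eq_fintype_card, Fintype.card_fin]
    · intro c d h1 h2
      rw [Fin.lt_def, resFun_val, resFun_val]
      exact TT.2.2.1 (dropCell hi c) (dropCell hi d) h1 h2
    · intro c d h1 h2
      rw [Fin.lt_def, resFun_val, resFun_val]
      exact TT.2.2.2 (dropCell hi c) (dropCell hi d) h1 h2
  refine Nat.card_eq_of_bijective
    (fun TT => ⟨resFun hi TT.1.1 (keybound TT.1 TT.2), hres TT.1 TT.2⟩) ⟨?_, ?_⟩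
  -- injectivity
  · rintro ⟨⟨T₁, hT₁⟩, hf₁⟩ ⟨⟨T₂, hT₂⟩, hf₂⟩ heq
    have hvals : ∀ c : Cell (dec L i) M, (T₁ (dropCell hi c) : ℕ) = (T₂ (dropCell hi c) : ℕ) := by
      intro c
      have h0 := Subtype.ext_iff.1 heq
      dsimp only at h0
      have h2 := congrFun h0 c
      have h3 := congrArg Fin.val h2
      rw [resFun_val, resFun_val] at h3
      exact h3
    apply Subtype.ext
    apply Subtype.ext
    funext c
    apply Fin.ext
    rcases eq_or_ne c.val (i, rw L i - 1) with hc | hc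
    · have e₁ : theMax hne T₁ = c := Subtype.ext (by rw [(key T₁ hT₁ hf₁).1, hc])
      have e₂ : theMax hne T₂ = c := Subtype.ext (by rw [(key T₂ hT₂ hf₂).1, hc])
      have v₁ : (T₁ c : ℕ) = (skewCells L M).card - 1 := by rw [← e₁]; exact theMax_spec hne hT₁
      have v₂ : (T₂ c : ℕ) = (skewCells L M).card - 1 := by rw [← e₂]; exact theMax_spec hne hT₂
      rw [v₁, v₂]
    · have : dropCell hi (liftCell hi c hc) = c := Subtype.ext rfl
      have hv := hvals (liftCell hi c hc)
      rw [this] at hv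
      exact hv
  -- surjectivity
  · rintro ⟨T', hT'⟩
    have hSspec : ∀ (c : Cell L M), c.val = (i, rw L i - 1) →
        ((extFun hi T') c : ℕ) = (skewCells L M).card - 1 := fun c h => extFun_pos hi T' h
    have hSlt : ∀ (c : Cell L M) (h : c.val ≠ (i, rw L i - 1)),
        ((extFun hi T') c : ℕ) < (skewCells L M).card - 1 := by
      intro c h
      rw [extFun_neg hi T' h]
      have := (T' (liftCell hi c h)).isLt
      omega
    have hSinj : Function.Injective (extFun hi T') := by
      intro a b hab
      have hab' : ((extFun hi T') a : ℕ) = ((extFun hi T') b : ℕ) := congrArg Fin.val hab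
      rcases eq_or_ne a.val (i, rw L i - 1) with ha | ha <;>
        rcases eq_or_ne b.val (i, rw L i - 1) with hb | hb
      · exact Subtype.ext (ha.trans hb.symm)
      · exfalso
        have h1 := hSspec a ha
        have h2 := hSlt b hb
        omega
      · exfalso
        have h1 := hSspec b hb
        have h2 := hSlt a ha
        omega
      · rw [extFun_neg hi T' ha, extFun_neg hi T' hb] at hab'
        have := hT'.1.1 (Fin.ext hab')
        have := congrArg Subtype.val this
        exact Subtype.ext this
    have hSstd : Std L M (extFun hi T') := by
      refine ⟨?_, ?_, ?_⟩
      · rw [Nat.bijective_iff_injective_and_card]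
        refine ⟨hSinj, ?_⟩
        rw [card_cell, Nat.card_eq_fintype_card, Fintype.card_fin]
      · -- rows
        intro c d h1 h2
        rw [Fin.lt_def]
        rcases eq_or_ne d.val (i, rw L i - 1) with hd | hd
        · have hcne : c.val ≠ (i, rw L i - 1) := by
            intro hcon
            rw [hcon, hd] at h2
            exact lt_irrefl _ h2
          have := hSlt c hcne
          have := hSspec d hd
          omega
        · rcases eq_or_ne c.val (i, rw L i - 1) with hc | hc
          · exfalso
            have hd2 : d.val.2 < rw L d.val.1 := (mem_skewCells.1 d.2).2
            have e1 : c.val.1 = i := by rw [hc]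
            have e2 : c.val.2 = rw L i - 1 := by rw [hc]
            rw [← h1, e1] at hd2
            rw [e2] at h2
            have := hi.2
            omega
          · rw [extFun_neg hi T' hc, extFun_neg hi T' hd]
            exact hT'.2.1 (liftCell hi c hc) (liftCell hi d hd) h1 h2
      · -- cols
        intro c d h1 h2
        rw [Fin.lt_def]
        rcases eq_or_ne d.val (i, rw L i - 1) with hd | hd
        · have hcne : c.val ≠ (i, rw L i - 1) := by
            intro hcon
            rw [hcon, hd] at h2
            exact lt_irrefl _ h2
          have := hSlt c hcne
          have := hSspec d hd
          omega
        · rcases eq_or_ne c.val (i, rw L i - 1) with hc | hc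
          · exfalso
            have hd2 : d.val.2 < rw L d.val.1 := (mem_skewCells.1 d.2).2
            have e1 : c.val.1 = i := by rw [hc]
            have e2 : c.val.2 = rw L i - 1 := by rw [hc]
            rw [e1] at h2
            have hle : rw L d.val.1 ≤ rw L (i+1) := rw_anti hL h2
            have hcor := hi.1
            rw [← h1, e2] at hd2
            omega
          · rw [extFun_neg hi T' hc, extFun_neg hi T' hd]
            exact hT'.2.2 (liftCell hi c hc) (liftCell hi d hd) h1 h2
    have hfibS : (theMax hne (extFun hi T')).val.1 = i := by
      have hval : ((extFun hi T') ⟨(i, rw L i - 1), cmax⟩ : ℕ) = (skewCells L M).card - 1 :=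
        hSspec _ rfl
      have : theMax hne (extFun hi T') = ⟨(i, rw L i - 1), cmax⟩ := theMax_eq hne hSstd hval
      rw [this]
    refine ⟨⟨⟨extFun hi T', hSstd⟩, hfibS⟩, ?_⟩
    apply Subtype.ext
    dsimp only
    funext c
    apply Fin.ext
    rw [resFun_val, extFun_neg hi T' (dropCell_ne hi c)]
    have : liftCell hi (dropCell hi c) (dropCell_ne hi c) = c := Subtype.ext rfl
    rw [this]

lemma sytCount_rec (hL : L.Pairwise (· ≥ ·)) (hM : M.Pairwise (· ≥ ·))
    (hne : (skewCells L M).Nonempty) :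
    sytCount L M = ∑ i ∈ cornerFinset L M, sytCount (dec L i) M := by
  classical
  rw [sytCount_eq, Nat.card_eq_fintype_card, ← Finset.card_univ]
  have hmap : ∀ TT ∈ (Finset.univ : Finset {T // Std L M T}),
      (theMax hne TT.1).val.1 ∈ cornerFinset L M := by
    intro TT _
    have := maxcell_spec hL hM TT.2 (theMax_spec hne TT.2)
    exact mem_cornerFinset.2 this.1
  rw [Finset.card_eq_sum_card_fiberwise hmap]
  refine Finset.sum_congr rfl ?_
  intro i hi
  rw [← fiber_count hL hM hne (mem_cornerFinset.1 hi), Nat.card_eq_fintype_card,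
    Fintype.card_subtype]

end Rec

section Det

/-- inverse factorial, extended by zero to negative integers -/
noncomputable def g (m : ℤ) : ℚ := if 0 ≤ m then ((m.toNat).factorial : ℚ)⁻¹ else 0

lemma g_neg {m : ℤ} (h : m < 0) : g m = 0 := by
  rw [g, if_neg (by omega)]

lemma g_zero : g 0 = 1 := by norm_num [g]

lemma g_mul (m : ℤ) : (m : ℚ) * g m = g (m - 1) := by
  rcases lt_trichotomy m 0 with h | h | h
  · rw [g_neg h, g_neg (by omega), mul_zero]
  · subst h
    rw [show ((0:ℤ) - 1) = -1 by ring, g_neg (by norm_num : (-1:ℤ) < 0)]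
    norm_num
  · rw [g, if_pos (by omega), g, if_pos (by omega)]
    have h1 : m.toNat = (m - 1).toNat + 1 := by omega
    have h2 : (((m - 1).toNat : ℤ) + 1) = m := by omega
    have h2' : (((m - 1).toNat : ℚ) + 1) = (m : ℚ) := by
      exact_mod_cast congrArg (fun z : ℤ => (z : ℚ)) h2
    rw [h1, Nat.factorial_succ]
    have h3 : ((m-1).toNat.factorial : ℚ) ≠ 0 := Nat.cast_ne_zero.2 (Nat.factorial_ne_zero _)
    have h4 : (m : ℚ) ≠ 0 := by
      have : (0:ℚ) < (m:ℚ) := by exact_mod_cast h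
      linarith
    push_cast
    rw [h2']
    field_simp

/-- inner shape column value -/
def mval (j b : ℕ) : ℕ := if b < j then 1 else 0

lemma mval_anti {j a b : ℕ} (h : a ≤ b) : mval j b ≤ mval j a := by
  unfold mval
  split <;> split <;> omega

lemma rw_replicate' (j i : ℕ) : rw (List.replicate j 1) i = mval j i := rw_replicate j i

/-- the Aitken matrix -/
noncomputable def Amat (r : ℕ) (L : List ℕ) (j : ℕ) : Matrix (Fin r) (Fin r) ℚ :=
  fun a b => g ((rw L a : ℤ) - mval j b - a + b)

lemma det_updateRow_colscale {r : ℕ} (A : Matrix (Fin r) (Fin r) ℚ) (c : Fin r → ℚ) :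
    ∑ i : Fin r, (A.updateRow i (fun b => c b * A i b)).det = (∑ b : Fin r, c b) * A.det := by
  have hrow : ∀ (i : Fin r) (σ : Equiv.Perm (Fin r)),
      (∏ x : Fin r, (A.updateRow i (fun b => c b * A i b)) (σ x) x)
        = c (σ.symm i) * ∏ x : Fin r, A (σ x) x := by
    intro i σ
    rw [← Finset.mul_prod_erase Finset.univ
      (fun x => (A.updateRow i (fun b => c b * A i b)) (σ x) x) (Finset.mem_univ (σ.symm i)),
      ← Finset.mul_prod_erase Finset.univ (fun x => A (σ x) x) (Finset.mem_univ (σ.symm i))]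
    have e1 : σ (σ.symm i) = i := σ.apply_symm_apply i
    have e2 : (A.updateRow i (fun b => c b * A i b)) (σ (σ.symm i)) (σ.symm i)
        = c (σ.symm i) * A (σ (σ.symm i)) (σ.symm i) := by
      rw [e1, Matrix.updateRow_self]
    rw [e2, mul_assoc]
    congr 1
    congr 1
    apply Finset.prod_congr rfl
    intro x hx
    have hxne : σ x ≠ i := by
      intro hc
      have : x = σ.symm i := by
        rw [← hc, Equiv.symm_apply_apply]
      exact Finset.ne_of_mem_erase hx this
    rw [Matrix.updateRow_ne hxne]
  simp only [Matrix.det_apply', hrow]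
  rw [Finset.sum_comm, Finset.mul_sum]
  apply Finset.sum_congr rfl
  intro σ _
  calc ∑ x : Fin r, (Equiv.Perm.sign σ : ℚ) * (c (σ.symm x) * ∏ i : Fin r, A (σ i) i)
      = ∑ x : Fin r, c (σ.symm x) * ((Equiv.Perm.sign σ : ℚ) * ∏ i : Fin r, A (σ i) i) := by
        apply Finset.sum_congr rfl
        intro x _
        ring
    _ = (∑ x : Fin r, c (σ.symm x)) * ((Equiv.Perm.sign σ : ℚ) * ∏ i : Fin r, A (σ i) i) :=
        (Finset.sum_mul _ _ _).symm
    _ = (∑ b : Fin r, c b) * ((Equiv.Perm.sign σ : ℚ) * ∏ i : Fin r, A (σ i) i) := by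
        rw [Equiv.sum_comp σ.symm c]

lemma sum_det_update {r : ℕ} (A : Matrix (Fin r) (Fin r) ℚ) (e c : Fin r → ℚ) :
    ∑ x : Fin r, (A.updateRow x (fun b => (e x + c b) * A x b)).det
      = ((∑ x : Fin r, e x) + ∑ b : Fin r, c b) * A.det := by
  have hsplit : ∀ x : Fin r, (A.updateRow x (fun b => (e x + c b) * A x b)).det
      = e x * A.det + (A.updateRow x (fun b => c b * A x b)).det := by
    intro x
    have : (fun b => (e x + c b) * A x b) = (e x • A x) + (fun b => c b * A x b) := by
      funext b
      simp [mul_comm, mul_add, add_mul]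
    rw [this, Matrix.det_updateRow_add, Matrix.det_updateRow_smul, Matrix.updateRow_eq_self]
  simp only [hsplit]
  rw [Finset.sum_add_distrib, det_updateRow_colscale, ← Finset.sum_mul, add_mul]

lemma replicate_sorted (j : ℕ) : (List.replicate j 1).Pairwise (· ≥ ·) := by
  rw [List.pairwise_iff_get]
  intro a b _
  have h : ∀ x : Fin (List.replicate j 1).length, (List.replicate j 1).get x = 1 := by
    intro x
    simp
  rw [h a, h b]

lemma strip_det {L : List ℕ} {j r : ℕ} (hj : j ≤ r) (h0 : rw L r = 0) :
    (Amat (r+1) L j).det = (Amat r L j).det := by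
  rw [Matrix.det_succ_row (Amat (r+1) L j) (Fin.last r)]
  rw [Finset.sum_eq_single (Fin.last r)]
  · have h1 : Amat (r+1) L j (Fin.last r) (Fin.last r) = 1 := by
      unfold Amat
      have : (Fin.last r : ℕ) = r := rfl
      rw [this, h0]
      have : mval j r = 0 := by unfold mval; rw [if_neg (by omega)]
      rw [this]
      norm_num [g_zero]
    rw [h1]
    have h2 : ((-1 : ℚ)) ^ ((Fin.last r : ℕ) + (Fin.last r : ℕ)) = 1 := by
      rw [show (Fin.last r : ℕ) + (Fin.last r : ℕ) = 2 * r from by simp [Fin.last]; ring]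
      rw [pow_mul]
      norm_num
    rw [h2]
    have h3 : ((Amat (r+1) L j).submatrix (Fin.last r).succAbove (Fin.last r).succAbove)
        = Amat r L j := by
      ext a b
      rw [Matrix.submatrix_apply]
      unfold Amat
      simp
    rw [h3]
    ring
  · intro b _ hb
    have hk : Amat (r+1) L j (Fin.last r) b = 0 := by
      unfold Amat
      apply g_neg
      have hb' : (b : ℕ) < r := by
        have := b.isLt
        have : (b : ℕ) ≠ r := fun h => hb (Fin.ext h)
        omega
      have : (Fin.last r : ℕ) = r := rfl
      rw [this, h0]
      have : (0:ℕ) ≤ mval j (b : ℕ) := Nat.zero_le _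
      push_cast
      omega
    rw [hk]
    ring
  · intro h
    exact absurd (Finset.mem_univ _) h

lemma card_skewCells_r {L M : List ℕ} (r : ℕ) (hcov : ∀ a, r ≤ a → rw L a = 0) :
    (skewCells L M).card = ∑ i ∈ Finset.range r, (rw L i - rw M i) := by
  rw [card_skewCells]
  set R := max L.length r with hR
  have h1 : ∑ i ∈ Finset.range L.length, (rw L i - rw M i)
      = ∑ i ∈ Finset.range R, (rw L i - rw M i) := by
    apply Finset.sum_subset (Finset.range_subset_range.2 (le_max_left _ _))
    intro x _ hx
    rw [Finset.mem_range] at hx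
    push_neg at hx
    rw [rw_eq_zero_of_le hx]
    omega
  have h2 : ∑ i ∈ Finset.range r, (rw L i - rw M i)
      = ∑ i ∈ Finset.range R, (rw L i - rw M i) := by
    apply Finset.sum_subset (Finset.range_subset_range.2 (le_max_right _ _))
    intro x _ hx
    rw [Finset.mem_range] at hx
    push_neg at hx
    rw [hcov x hx]
    omega
  rw [h1, ← h2]

lemma mval_le_rw {L : List ℕ} {j : ℕ} (hpos : ∀ a, a < j → 1 ≤ rw L a) (a : ℕ) :
    mval j a ≤ rw L a := by
  unfold mval
  split
  · exact hpos a (by assumption)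
  · exact Nat.zero_le _

lemma aitken : ∀ (N : ℕ) (L : List ℕ) (j r : ℕ),
    L.Pairwise (· ≥ ·) → (∀ a, a < j → 1 ≤ rw L a) → j ≤ r →
    (∀ a, r ≤ a → rw L a = 0) →
    (skewCells L (List.replicate j 1)).card = N →
    (sytCount L (List.replicate j 1) : ℚ) = (N.factorial : ℚ) * (Amat r L j).det := by
  intro N
  induction N using Nat.strong_induction_on with
  | _ N IHN =>
  intro L j r hsort hpos
  induction r using Nat.strong_induction_on with
  | _ r IHr =>
  intro hjr hcover hcard
  by_cases hstrip : 0 < r ∧ rw L (r-1) = 0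
  · obtain ⟨hr0, hz⟩ := hstrip
    obtain ⟨r', rfl⟩ : ∃ r', r = r' + 1 := ⟨r - 1, by omega⟩
    have hz' : rw L r' = 0 := by simpa using hz
    have hjr' : j ≤ r' := by
      rcases Nat.lt_or_ge j (r' + 1) with h | h
      · omega
      · have := hpos r' (by omega)
        omega
    have hcover' : ∀ a, r' ≤ a → rw L a = 0 := by
      intro a ha
      rcases eq_or_lt_of_le ha with rfl | h
      · exact hz'
      · exact hcover a (by omega)
    rw [strip_det hjr' hz']
    exact IHr r' (by omega) hjr' hcover' hcard
  · have hallpos : ∀ a, a < r → 1 ≤ rw L a := by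
      intro a ha
      have h1 : rw L (r-1) ≠ 0 := by
        intro hc
        exact hstrip ⟨by omega, hc⟩
      have h2 := rw_anti hsort (show a ≤ r-1 by omega)
      omega
    rcases Nat.eq_zero_or_pos N with hN | hN
    · -- base case: empty skew shape
      subst hN
      have hempty : skewCells L (List.replicate j 1) = ∅ := Finset.card_eq_zero.1 hcard
      rw [sytCount_of_empty hempty]
      have hsum := (card_skewCells_r r hcover (M := List.replicate j 1)).symm.trans hcard
      have hrows : ∀ a, a < r → rw L a = mval j a := by
        intro a ha
        have hterm := (Finset.sum_eq_zero_iff.1 hsum) a (Finset.mem_range.2 ha)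
        rw [rw_replicate'] at hterm
        have := mval_le_rw hpos a
        omega
      have hdet : (Amat r L j).det = 1 := by
        rw [Matrix.det_of_upperTriangular]
        · apply Finset.prod_eq_one
          intro a _
          unfold Amat
          rw [hrows a a.isLt]
          rw [show ((mval j a : ℤ) - mval j a - a + a) = 0 from by ring, g_zero]
        · intro a b hab
          unfold Amat
          apply g_neg
          rw [hrows a a.isLt]
          have h1 : mval j (a : ℕ) ≤ mval j (b : ℕ) := mval_anti (le_of_lt hab)
          have h2 : (b : ℕ) < (a : ℕ) := hab
          omega
      rw [hdet]
      norm_num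
    · -- inductive step
      have hne : (skewCells L (List.replicate j 1)).Nonempty := Finset.card_pos.1 (by omega)
      have hMsort := replicate_sorted j
      rw [sytCount_rec hsort hMsort hne]
      have hcornerlt : ∀ i, IsCorner L (List.replicate j 1) i → i < r := by
        intro i hic
        have h2 := hic.2
        by_contra hcon
        rw [hcover i (by omega)] at h2
        omega
      have hcorner : ∀ i ∈ cornerFinset L (List.replicate j 1),
          (sytCount (dec L i) (List.replicate j 1) : ℚ)
            = ((N-1).factorial : ℚ) * (Amat r (dec L i) j).det := by
        intro i hi
        have hic := mem_cornerFinset.1 hi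
        have hil := corner_lt_length hic
        have h2 := hic.2
        rw [rw_replicate'] at h2
        apply IHN (N-1) (by omega)
        · exact dec_sorted hsort hic
        · intro a ha
          rcases eq_or_ne a i with rfl | hne2
          · rw [rw_dec_eq hil]
            have hm : mval j a = 1 := by unfold mval; rw [if_pos ha]
            omega
          · rw [rw_dec_ne (Ne.symm hne2)]
            exact hpos a ha
        · exact hjr
        · intro a ha
          rcases eq_or_ne a i with rfl | hne2
          · exact absurd (hcornerlt a hic) (by omega)
          · rw [rw_dec_ne (Ne.symm hne2)]
            exact hcover a ha
        · rw [card_skewCells_dec hic, hcard]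
      push_cast
      rw [Finset.sum_congr rfl hcorner]
      -- the decremented-row determinant function
      set f : ℕ → ℚ := fun i =>
        if h : i < r then
          ((Amat r L j).updateRow ⟨i, h⟩ (fun b => g ((rw L i : ℤ) - 1 - mval j b - i + b))).det
        else 0 with hf
      have claim1 : ∀ i ∈ cornerFinset L (List.replicate j 1),
          (Amat r (dec L i) j).det = f i := by
        intro i hi
        have hic := mem_cornerFinset.1 hi
        have hil := corner_lt_length hic
        have hirr := hcornerlt i hic
        have h2 := hic.2
        rw [rw_replicate'] at h2
        simp only [hf]
        rw [dif_pos hirr]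
        congr 1
        ext a b
        rcases eq_or_ne (a : ℕ) i with ha | ha
        · have : a = (⟨i, hirr⟩ : Fin r) := Fin.ext ha
          subst this
          rw [Matrix.updateRow_self]
          unfold Amat
          rw [rw_dec_eq hil]
          congr 1
          have : 1 ≤ rw L i := by omega
          push_cast [Nat.cast_sub this]
          ring
        · rw [Matrix.updateRow_ne (fun hc => ha (by rw [hc]))]
          unfold Amat
          rw [rw_dec_ne (Ne.symm ha)]
      rw [Finset.sum_congr rfl (fun i hi => by rw [claim1 i hi])]
      have claim2 : ∀ i ∈ Finset.range r, i ∉ cornerFinset L (List.replicate j 1) → f i = 0 := by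
        intro i hi hnc
        rw [Finset.mem_range] at hi
        have hl1 : 1 ≤ rw L i := hallpos i hi
        have hnc' : ¬ IsCorner L (List.replicate j 1) i := fun h => hnc (mem_cornerFinset.2 h)
        unfold IsCorner at hnc'
        rw [rw_replicate'] at hnc'
        simp only [hf]
        rw [dif_pos hi]
        by_cases hc1 : rw L (i+1) < rw L i
        · -- second condition fails : mval j i ≥ rw L i, so rw L i = 1, i < j, and i+1 ≥ r
          have hm : mval j i ≥ rw L i := by omega
          have hmi : mval j i = 1 := by
            have : mval j i ≤ 1 := by unfold mval; split <;> omega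
            omega
          have hij : i < j := by
            by_contra hcon
            unfold mval at hmi
            rw [if_neg hcon] at hmi
            omega
          have hli : rw L i = 1 := by omega
          have hi1r : ¬ (i + 1 < r) := by
            intro hcon
            have := hallpos (i+1) hcon
            omega
          have hjr' : j = r := by omega
          apply Matrix.det_eq_zero_of_row_eq_zero (⟨i, hi⟩ : Fin r)
          intro b
          rw [Matrix.updateRow_self]
          apply g_neg
          have hbj : (b : ℕ) < j := by have := b.isLt; omega
          have hmb : mval j (b : ℕ) = 1 := by unfold mval; rw [if_pos hbj]
          rw [hmb, hli]
          have : (b : ℕ) ≤ i := by have := b.isLt; omega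
          push_cast
          omega
        · -- first condition fails : equal rows
          have hle : rw L (i+1) ≤ rw L i := rw_anti hsort (by omega)
          have heq : rw L (i+1) = rw L i := by omega
          have hi1r : i + 1 < r := by
            by_contra hcon
            rw [hcover (i+1) (by omega)] at heq
            omega
          apply Matrix.det_zero_of_row_eq (i := (⟨i, hi⟩ : Fin r)) (j := (⟨i+1, hi1r⟩ : Fin r))
          · intro hcon
            have := congrArg Fin.val hcon
            simp at this
          · funext b
            rw [Matrix.updateRow_self, Matrix.updateRow_ne (by
              intro hcon
              have := congrArg Fin.val hcon
              simp at this)]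
            unfold Amat
            congr 1
            rw [show rw L ((⟨i+1, hi1r⟩ : Fin r) : ℕ) = rw L i from heq]
            push_cast
            ring
      rw [← Finset.mul_sum]
      rw [Finset.sum_subset (fun i hi => Finset.mem_range.2 (hcornerlt i (mem_cornerFinset.1 hi)))
        claim2]
      -- now over the full range
      have hfin : ∑ i ∈ Finset.range r, f i
          = ∑ x : Fin r, ((Amat r L j).updateRow x (fun b => g ((rw L (x:ℕ) : ℤ) - 1 - mval j b - (x:ℕ) + b))).det := by
        rw [← Fin.sum_univ_eq_sum_range]
        apply Finset.sum_congr rfl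
        intro x _
        simp only [hf]
        rw [dif_pos x.isLt]
      rw [hfin]
      have hmatch : ∀ (x : Fin r) (b : Fin r),
          g ((rw L (x:ℕ) : ℤ) - 1 - mval j b - (x:ℕ) + b)
            = ((((rw L (x:ℕ) : ℤ) - (x:ℕ) : ℤ) : ℚ) + (((b : ℕ) - (mval j (b:ℕ)) : ℤ) : ℚ)) * Amat r L j x b := by
        intro x b
        unfold Amat
        have := g_mul ((rw L (x:ℕ) : ℤ) - mval j (b:ℕ) - (x:ℕ) + (b:ℕ))
        rw [show ((rw L (x:ℕ) : ℤ) - mval j (b:ℕ) - (x:ℕ) + (b:ℕ)) - 1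
            = (rw L (x:ℕ) : ℤ) - 1 - mval j (b:ℕ) - (x:ℕ) + (b:ℕ) from by ring] at this
        rw [← this]
        congr 1
        push_cast
        ring
      have hrw : ∀ x : Fin r,
          (fun b : Fin r => g ((rw L (x:ℕ) : ℤ) - 1 - mval j b - (x:ℕ) + b))
            = (fun b : Fin r => ((((rw L (x:ℕ) : ℤ) - (x:ℕ) : ℤ) : ℚ)
                + (((b : ℕ) - (mval j (b:ℕ)) : ℤ) : ℚ)) * Amat r L j x b) := by
        intro x
        funext b
        exact hmatch x b
      rw [Finset.sum_congr rfl (fun x _ => by rw [hrw x])]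
      rw [sum_det_update (Amat r L j) (fun x => (((rw L (x:ℕ) : ℤ) - (x:ℕ) : ℤ) : ℚ))
        (fun b => (((b : ℕ) - (mval j (b:ℕ)) : ℤ) : ℚ))]
      -- identify the coefficient with N
      have hcoef : (∑ x : Fin r, ((((rw L (x:ℕ) : ℤ) - (x:ℕ) : ℤ) : ℚ)))
          + (∑ b : Fin r, (((b : ℕ) - (mval j (b:ℕ)) : ℤ) : ℚ)) = (N : ℚ) := by
        rw [← Finset.sum_add_distrib]
        have : ∀ x : Fin r, ((((rw L (x:ℕ) : ℤ) - (x:ℕ) : ℤ) : ℚ))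
            + (((x : ℕ) - (mval j (x:ℕ)) : ℤ) : ℚ)
            = ((rw L (x:ℕ) - mval j (x:ℕ) : ℤ) : ℚ) := by
          intro x
          push_cast
          ring
        rw [Finset.sum_congr rfl (fun x _ => this x)]
        have hcast : ∀ x : Fin r, ((rw L (x:ℕ) - mval j (x:ℕ) : ℤ) : ℚ)
            = ((rw L (x:ℕ) - mval j (x:ℕ) : ℕ) : ℚ) := by
          intro x
          have := mval_le_rw hpos (x : ℕ)
          push_cast [Nat.cast_sub this]
          ring
        rw [Finset.sum_congr rfl (fun x _ => hcast x)]
        rw [Fin.sum_univ_eq_sum_range (fun i => ((rw L i - mval j i : ℕ) : ℚ)) r]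
        rw [← Nat.cast_sum]
        congr 1
        rw [← hcard, card_skewCells_r r hcover]
        apply Finset.sum_congr rfl
        intro x _
        rw [rw_replicate']
      rw [hcoef]
      rw [← mul_assoc]
      congr 1
      rw [← Nat.cast_mul]
      congr 1
      rw [mul_comm]
      exact Nat.mul_factorial_pred hN.ne'

lemma sytCount_pos : ∀ (N : ℕ) (L M : List ℕ), L.Pairwise (· ≥ ·) → M.Pairwise (· ≥ ·) →
    (skewCells L M).card = N → 1 ≤ sytCount L M := by
  intro N
  induction N using Nat.strong_induction_on with
  | _ N IH =>
  intro L M hL hM hcard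
  rcases Nat.eq_zero_or_pos N with hN | hN
  · subst hN
    rw [sytCount_of_empty (Finset.card_eq_zero.1 hcard)]
  · have hne : (skewCells L M).Nonempty := Finset.card_pos.1 (by omega)
    rw [sytCount_rec hL hM hne]
    obtain ⟨i0, hi0⟩ := exists_corner hL hM hne
    have h1 : 1 ≤ sytCount (dec L i0) M := by
      apply IH (N-1) (by omega) _ _ (dec_sorted hL hi0) hM
      rw [card_skewCells_dec hi0, hcard]
    calc (1:ℕ) ≤ sytCount (dec L i0) M := h1
      _ ≤ ∑ i ∈ cornerFinset L M, sytCount (dec L i) M :=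
        Finset.single_le_sum (f := fun i => sytCount (dec L i) M)
          (fun i _ => Nat.zero_le _) (mem_cornerFinset.2 hi0)

lemma sum_rw (L : List ℕ) : ∑ i ∈ Finset.range L.length, rw L i = L.sum := by
  induction L with
  | nil => simp [rw]
  | cons x xs ih =>
    rw [List.length_cons, Finset.sum_range_succ']
    have h0 : rw (x :: xs) 0 = x := rfl
    have hs : ∀ i, rw (x :: xs) (i+1) = rw xs i := fun i => rfl
    simp only [hs, h0, List.sum_cons, ih]
    ring

lemma length_le_sum {L : List ℕ} (h : ∀ x ∈ L, 0 < x) : L.length ≤ L.sum := by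
  induction L with
  | nil => simp
  | cons x xs ih =>
    have hx := h x (List.mem_cons_self)
    have := ih (fun y hy => h y (List.mem_cons_of_mem x hy))
    simp only [List.length_cons, List.sum_cons]
    omega

lemma sum_mval {t j : ℕ} (h : j ≤ t) : ∑ i ∈ Finset.range t, mval j i = j := by
  unfold mval
  rw [Finset.sum_boole]
  have : (Finset.range t).filter (fun i => i < j) = Finset.range j := by
    ext x
    simp only [Finset.mem_filter, Finset.mem_range]
    omega
  rw [this, Finset.card_range]
  simp

lemma g_natcast (m : ℕ) : g ((m : ℕ) : ℤ) = ((m.factorial : ℚ))⁻¹ := by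
  rw [g, if_pos (by positivity)]
  simp

lemma main_q (k t n : ℕ) (L : List ℕ) (hlen : L.length = t) (hsort : L.Pairwise (· ≥ ·))
    (hposL : ∀ x ∈ L, 0 < x) (hsum : L.sum = k) (hn : rw L 0 ≤ n) :
    (sytCount (n :: L) [] : ℚ)
      = ∑ j ∈ Finset.range (t+1),
          (-1 : ℚ)^j * ((n+k).choose (k-j) : ℚ) * (sytCount L (List.replicate j 1) : ℚ) := by
  have hposi : ∀ i, i < t → 1 ≤ rw L i := by
    intro i hi
    rw [← hlen] at hi
    rw [rw, List.getD_eq_getElem _ _ hi]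
    exact hposL _ (List.getElem_mem hi)
  have htk : t ≤ k := by
    rw [← hlen, ← hsum]
    exact length_le_sum hposL
  have hs0 : ∀ i, rw (n::L) (i+1) = rw L i := fun i => rfl
  have hsn : rw (n::L) 0 = n := rfl
  have hsort' : (n::L).Pairwise (· ≥ ·) := by
    rw [List.pairwise_cons]
    refine ⟨?_, hsort⟩
    intro b hb
    obtain ⟨i, hi, rfl⟩ := List.getElem_of_mem hb
    have h1 : L[i] = rw L i := by rw [rw, List.getD_eq_getElem _ _ hi]
    rw [h1]
    exact le_trans (rw_anti hsort (Nat.zero_le i)) hn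
  have hcovL : ∀ a, t ≤ a → rw L a = 0 := by
    intro a ha
    exact rw_eq_zero_of_le (by omega)
  have hcover : ∀ a, t+1 ≤ a → rw (n::L) a = 0 := by
    intro a ha
    obtain ⟨a', rfl⟩ : ∃ a', a = a' + 1 := ⟨a - 1, by omega⟩
    rw [hs0]
    exact hcovL a' (by omega)
  have hrwnil : ∀ i, rw ([] : List ℕ) i = 0 := fun i => rfl
  have hcards : (skewCells (n::L) (List.replicate 0 1)).card = n + k := by
    rw [show List.replicate 0 1 = ([] : List ℕ) from rfl]
    rw [card_skewCells_r (t+1) hcover]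
    rw [Finset.sum_range_succ']
    simp only [hs0, hsn, hrwnil, Nat.sub_zero]
    have hsr : ∑ i ∈ Finset.range t, rw L i = k := by
      rw [← hlen, sum_rw, hsum]
    omega
  have hbig := aitken (n+k) (n::L) 0 (t+1) hsort'
    (fun a ha => absurd ha (Nat.not_lt_zero a)) (Nat.zero_le _) hcover hcards
  rw [show List.replicate 0 1 = ([] : List ℕ) from rfl] at hbig
  rw [hbig]
  rw [Matrix.det_succ_row_zero, Finset.mul_sum]
  rw [← Fin.sum_univ_eq_sum_range
    (fun j => (-1 : ℚ)^j * ((n+k).choose (k-j) : ℚ) * (sytCount L (List.replicate j 1) : ℚ)) (t+1)]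
  apply Finset.sum_congr rfl
  intro b _
  have hbt : (b : ℕ) ≤ t := by have := b.isLt; omega
  have hA0b : Amat (t+1) (n::L) 0 (0 : Fin (t+1)) b = (((n + (b:ℕ)).factorial : ℚ))⁻¹ := by
    unfold Amat
    have h1 : mval 0 (b:ℕ) = 0 := by unfold mval; rw [if_neg (by omega)]
    have h2 : rw (n::L) ((0 : Fin (t+1)) : ℕ) = n := rfl
    rw [h2, h1]
    rw [show ((n:ℤ) - ((0:ℕ) : ℤ) - (((0 : Fin (t+1)) : ℕ) : ℤ) + ((b:ℕ) : ℤ))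
        = ((n + (b:ℕ) : ℕ) : ℤ) from by push_cast [Fin.val_zero]; ring]
    exact g_natcast _
  have hsubm : (Amat (t+1) (n::L) 0).submatrix Fin.succ b.succAbove = Amat t L (b:ℕ) := by
    ext a c
    rw [Matrix.submatrix_apply]
    unfold Amat
    have hv : ((Fin.succ a : Fin (t+1)) : ℕ) = (a:ℕ) + 1 := rfl
    have hrow : rw (n::L) ((Fin.succ a : Fin (t+1)) : ℕ) = rw L (a : ℕ) := by
      rw [hv]
      exact hs0 _
    have h1 : ∀ m : ℕ, mval 0 m = 0 := by
      intro m; unfold mval; rw [if_neg (by omega)]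
    rw [hrow, h1, hv]
    rcases Nat.lt_or_ge (c : ℕ) (b : ℕ) with h | h
    · have hlt : Fin.castSucc c < b := by
        rw [Fin.lt_def]
        simpa using h
      rw [Fin.succAbove_of_castSucc_lt _ _ hlt]
      have hval : ((Fin.castSucc c : Fin (t+1)) : ℕ) = (c : ℕ) := rfl
      rw [hval]
      have hm : mval (b:ℕ) (c:ℕ) = 1 := by unfold mval; rw [if_pos h]
      rw [hm]
      congr 1
      push_cast
      ring
    · have hle : b ≤ Fin.castSucc c := by
        rw [Fin.le_def]
        simpa using h
      rw [Fin.succAbove_of_le_castSucc _ _ hle]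
      have hval : ((Fin.succ c : Fin (t+1)) : ℕ) = (c : ℕ) + 1 := rfl
      rw [hval]
      have hm : mval (b:ℕ) (c:ℕ) = 0 := by unfold mval; rw [if_neg (by omega)]
      rw [hm]
      congr 1
      push_cast
      ring
  have hposb : ∀ a, a < (b:ℕ) → 1 ≤ rw L a := fun a ha => hposi a (lt_of_lt_of_le ha hbt)
  have hcardb : (skewCells L (List.replicate (b:ℕ) 1)).card = k - (b:ℕ) := by
    rw [card_skewCells_r t hcovL]
    have e1 : ∑ i ∈ Finset.range t, (rw L i - rw (List.replicate (b:ℕ) 1) i)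
        = ∑ i ∈ Finset.range t, (rw L i - mval (b:ℕ) i) :=
      Finset.sum_congr rfl (fun i _ => by rw [rw_replicate'])
    rw [e1]
    rw [Finset.sum_tsub_distrib _ (fun i _ => mval_le_rw hposb i)]
    rw [sum_mval hbt]
    have hsr : ∑ i ∈ Finset.range t, rw L i = k := by rw [← hlen, sum_rw, hsum]
    rw [hsr]
  have hsmall := aitken (k - (b:ℕ)) L (b:ℕ) t hsort hposb hbt hcovL hcardb
  have hfactne : ∀ m : ℕ, ((m.factorial : ℚ)) ≠ 0 :=
    fun m => Nat.cast_ne_zero.2 (Nat.factorial_ne_zero m)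
  have hdet : (Amat t L (b:ℕ)).det
      = (sytCount L (List.replicate (b:ℕ) 1) : ℚ) / (((k - (b:ℕ)).factorial : ℚ)) := by
    rw [hsmall]
    field_simp
  rw [hA0b, hsubm, hdet]
  have hchoose : (((n+k).choose (k - (b:ℕ)) : ℕ) : ℚ)
      = ((n+k).factorial : ℚ) / (((k - (b:ℕ)).factorial : ℚ) * ((n + (b:ℕ)).factorial : ℚ)) := by
    rw [Nat.cast_choose ℚ (show k - (b:ℕ) ≤ n + k by omega)]
    rw [show n + k - (k - (b:ℕ)) = n + (b:ℕ) from by omega]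
  rw [hchoose]
  field_simp

lemma headD_eq_rw (L : List ℕ) : L.headD 0 = rw L 0 := by
  cases L <;> rfl

noncomputable def qpoly (k m : ℕ) : Polynomial ℚ :=
  Polynomial.C (((m.factorial : ℚ))⁻¹)
    * ((descPochhammer ℚ m).comp (Polynomial.X + Polynomial.C (k:ℚ)))

lemma qpoly_eval (k m n : ℕ) : (qpoly k m).eval (n : ℚ) = ((n+k).choose m : ℚ) := by
  unfold qpoly
  rw [Polynomial.eval_mul, Polynomial.eval_C, Polynomial.eval_comp]
  rw [Polynomial.eval_add, Polynomial.eval_X, Polynomial.eval_C]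
  rw [show ((n:ℚ) + (k:ℚ)) = ((n + k : ℕ) : ℚ) from by push_cast; ring]
  rw [descPochhammer_eval_eq_descFactorial ℚ (n+k) m]
  rw [Nat.descFactorial_eq_factorial_mul_choose]
  have : ((m.factorial : ℚ)) ≠ 0 := Nat.cast_ne_zero.2 (Nat.factorial_ne_zero m)
  push_cast
  field_simp

lemma qpoly_monicpart (k m : ℕ) : ((descPochhammer ℚ m).comp
    (Polynomial.X + Polynomial.C (k:ℚ))).Monic :=
  (monic_descPochhammer ℚ m).comp (Polynomial.monic_X_add_C _)
    (by rw [Polynomial.natDegree_X_add_C]; omega)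

lemma qpoly_degree (k m : ℕ) : (qpoly k m).degree = (m : WithBot ℕ) := by
  unfold qpoly
  rw [Polynomial.degree_C_mul
    (inv_ne_zero (Nat.cast_ne_zero.2 (Nat.factorial_ne_zero m)))]
  rw [Polynomial.degree_eq_natDegree (qpoly_monicpart k m).ne_zero]
  rw [Polynomial.natDegree_comp, descPochhammer_natDegree, Polynomial.natDegree_X_add_C, mul_one]

end Det

end SytAux

/-- `n ↦ f^{(n,λ)}` agrees for `n ≥ λ₁` with a polynomial of degree `k`; explicitly
`f^{(n,λ)} = ∑_{j=0}^t (−1)^j C(n+k, k−j) f^{λ/(1^j)}`, and each `C(n+k, k−j)` is a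
polynomial in `n` of degree `k−j`. -/
theorem sytCount_polynomial (k t : ℕ) (L : List ℕ) (hlen : L.length = t)
    (hpart : IsPartitionOf k L) :
    (∃ p : Polynomial ℚ, p.degree = (k : ℕ) ∧
      ∀ n : ℕ, L.headD 0 ≤ n → (sytCount (n :: L) [] : ℚ) = p.eval (n : ℚ)) ∧
    (∀ n : ℕ, L.headD 0 ≤ n →
      (sytCount (n :: L) [] : ℤ) =
        ∑ j ∈ Finset.range (t + 1),
          (-1 : ℤ) ^ j * ((n + k).choose (k - j) : ℤ) *
            (sytCount L (List.replicate j 1) : ℤ)) ∧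
    (∀ j : ℕ, j ≤ t → ∃ q : Polynomial ℚ, q.degree = ((k - j : ℕ) : WithBot ℕ) ∧
      ∀ n : ℕ, ((n + k).choose (k - j) : ℚ) = q.eval (n : ℚ)) := by
  classical
  obtain ⟨hsort, hposL, hsum⟩ := hpart
  have htk : t ≤ k := by
    rw [← hlen, ← hsum]
    exact SytAux.length_le_sum hposL
  have hmain : ∀ n : ℕ, L.headD 0 ≤ n → (sytCount (n :: L) [] : ℚ)
      = ∑ j ∈ Finset.range (t+1),
          (-1:ℚ)^j * ((n+k).choose (k-j) : ℚ) * (sytCount L (List.replicate j 1) : ℚ) := by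
    intro n hn
    refine SytAux.main_q k t n L hlen hsort hposL hsum ?_
    rw [← SytAux.headD_eq_rw]
    exact hn
  have hsytpos : ∀ j : ℕ, 1 ≤ sytCount L (List.replicate j 1) := by
    intro j
    exact SytAux.sytCount_pos _ L (List.replicate j 1) hsort (SytAux.replicate_sorted j) rfl
  refine ⟨?_, ?_, ?_⟩
  · -- the polynomial
    refine ⟨∑ j ∈ Finset.range (t+1),
      Polynomial.C ((-1:ℚ)^j * (sytCount L (List.replicate j 1) : ℚ)) * SytAux.qpoly k (k-j),
      ?_, ?_⟩
    · rw [Finset.sum_range_succ']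
      have hcne : ∀ j : ℕ, ((-1:ℚ)^j * (sytCount L (List.replicate j 1) : ℚ)) ≠ 0 := by
        intro j
        apply mul_ne_zero
        · exact pow_ne_zero _ (by norm_num)
        · have := hsytpos j
          exact Nat.cast_ne_zero.2 (by omega)
      have hdeg0 : (Polynomial.C ((-1:ℚ)^0 * (sytCount L (List.replicate 0 1) : ℚ))
          * SytAux.qpoly k (k-0)).degree = (k : WithBot ℕ) := by
        rw [Polynomial.degree_C_mul (hcne 0), SytAux.qpoly_degree, Nat.sub_zero]
      rw [Polynomial.degree_add_eq_right_of_degree_lt, hdeg0]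
      rw [hdeg0]
      apply lt_of_le_of_lt (Polynomial.degree_sum_le _ _)
      rw [Finset.sup_lt_iff (by exact WithBot.bot_lt_coe k)]
      intro j hj
      rw [Finset.mem_range] at hj
      rw [Polynomial.degree_C_mul (hcne (j+1)), SytAux.qpoly_degree]
      rw [Nat.cast_lt]
      omega
    · intro n hn
      rw [hmain n hn, Polynomial.eval_finset_sum]
      apply Finset.sum_congr rfl
      intro j _
      rw [Polynomial.eval_mul, Polynomial.eval_C, SytAux.qpoly_eval]
      ring
  · intro n hn
    have h := hmain n hn
    exact_mod_cast h
  · intro j _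
    exact ⟨SytAux.qpoly k (k-j), SytAux.qpoly_degree k (k-j),
      fun n => (SytAux.qpoly_eval k (k-j) n).symm⟩
end
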